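/- arXiv:2605.10037 — 8 statements merged into one kernel-verified Lean document; each statement's English description precedes it below -/
import Mathlib

section
/- Let A be an n×n complex matrix and let α, β be real numbers. If for every eigenvalue μ of A (i.e., every μ in the spectrum of A over ℂ) one has μ·sinh(μ) + (α + βμ)·cosh(μ) ≠ 0, then the matrix A·sinh(A) + (α·I + β·A)·cosh(A) is invertible. -/
open scoped Matrix
open NormedSpace

/-!
`A` commutes with `B = A sinh A + (α + βA) cosh A`, so if `B` were singular its kernel would be a
nonzero `A`-invariant subspace and would contain an eigenvector `v` of `A`, say `A v = μ v`.
On such a vector `exp (±A)` acts as `e^{±μ}`, hence `B v = (μ sinh μ + (α + βμ) cosh μ) v ≠ 0`.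
-/

namespace Module.End

variable {K V : Type*} [Field K] [IsAlgClosed K] [AddCommGroup V] [Module K V]
  [FiniteDimensional K V]

theorem exists_hasEigenvector_of_commute {f g : End K V} (hfg : Commute f g) {ν : K}
    (hν : g.HasEigenvalue ν) : ∃ μ v, f.HasEigenvector μ v ∧ g.HasEigenvector ν v := by
  have hmaps : ∀ x ∈ g.eigenspace ν, f x ∈ g.eigenspace ν :=
    fun x hx => mapsTo_genEigenspace_of_comm hfg.symm ν 1 hx
  have : Nontrivial (g.eigenspace ν) := Submodule.nontrivial_iff_ne_bot.mpr hν
  obtain ⟨μ, hμ⟩ := exists_eigenvalue (f.restrict hmaps)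
  obtain ⟨w, hw⟩ := hμ.exists_hasEigenvector
  have hw0 : (w : V) ≠ 0 := by simpa using hw.2
  exact ⟨μ, w, ⟨eigenspace_restrict_le_eigenspace f hmaps μ ⟨w, hw.1, rfl⟩, hw0⟩, ⟨w.2, hw0⟩⟩

end Module.End

namespace Matrix

variable {m : Type*} [Fintype m] [DecidableEq m]

theorem exists_mulVec_eq_smul_of_commute_of_not_isUnit {K : Type*} [Field K] [IsAlgClosed K]
    {A B : Matrix m m K} (hAB : Commute A B) (hB : ¬IsUnit B) :
    ∃ μ ∈ spectrum K A, ∃ v ≠ 0, A *ᵥ v = μ • v ∧ B *ᵥ v = 0 := by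
  have hker : Module.End.HasEigenvalue (toLin' B) 0 := by
    obtain ⟨v, hv, hBv⟩ := exists_mulVec_eq_zero_iff.mpr
      (by simpa [isUnit_iff_isUnit_det] using hB)
    exact Module.End.hasEigenvalue_of_hasEigenvector
      ⟨by simpa [Module.End.mem_eigenspace_iff] using hBv, hv⟩
  obtain ⟨μ, v, hAv, hBv⟩ := Module.End.exists_hasEigenvector_of_commute
    (hAB.map toLinAlgEquiv') hker
  refine ⟨μ, ?_, v, hAv.2, hAv.apply_eq_smul, by simpa using hBv.apply_eq_smul⟩
  rw [← spectrum_toLin']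
  exact (Module.End.hasEigenvalue_of_hasEigenvector hAv).mem_spectrum

open scoped Norms.Operator in
theorem exp_mulVec_of_mulVec_eq_smul {𝕂 : Type*} [RCLike 𝕂] {A : Matrix m m 𝕂} {v : m → 𝕂}
    {μ : 𝕂} (h : A *ᵥ v = μ • v) : exp A *ᵥ v = exp μ • v := by
  have hpow (k : ℕ) : A ^ k *ᵥ v = μ ^ k • v := by
    induction k with
    | zero => simp
    | succ k ih => rw [pow_succ, ← mulVec_mulVec, h, mulVec_smul, ih, smul_smul, ← pow_succ']
  let applyTo : Matrix m m 𝕂 →L[𝕂] (m → 𝕂) :=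
    (LinearMap.applyₗ v ∘ₗ toLin'.toLinearMap).toContinuousLinearMap
  have hsum := (exp_series_hasSum_exp' (𝕂 := 𝕂) A).mapL applyTo
  simp only [applyTo, map_smul, LinearMap.coe_toContinuousLinearMap', LinearMap.coe_comp,
    Function.comp_apply, LinearEquiv.coe_coe, toLin'_apply, LinearMap.applyₗ_apply_apply, hpow,
    smul_smul] at hsum
  have hsum' := (exp_series_hasSum_exp' (𝕂 := 𝕂) μ).smul_const v
  simp only [smul_eq_mul] at hsum'
  exact hsum.unique hsum'

theorem sinh_mulVec_of_mulVec_eq_smul {A : Matrix m m ℂ} {v : m → ℂ} {μ : ℂ}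
    (h : A *ᵥ v = μ • v) :
    ((2 : ℂ)⁻¹ • (exp A - exp (-A))) *ᵥ v = Complex.sinh μ • v := by
  have hneg : -A *ᵥ v = -μ • v := by rw [neg_mulVec, h, neg_smul]
  rw [smul_mulVec, sub_mulVec, exp_mulVec_of_mulVec_eq_smul h,
    exp_mulVec_of_mulVec_eq_smul hneg, ← sub_smul, smul_smul, Complex.sinh,
    Complex.exp_eq_exp_ℂ, div_eq_inv_mul]

theorem cosh_mulVec_of_mulVec_eq_smul {A : Matrix m m ℂ} {v : m → ℂ} {μ : ℂ}
    (h : A *ᵥ v = μ • v) :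
    ((2 : ℂ)⁻¹ • (exp A + exp (-A))) *ᵥ v = Complex.cosh μ • v := by
  have hneg : -A *ᵥ v = -μ • v := by rw [neg_mulVec, h, neg_smul]
  rw [smul_mulVec, add_mulVec, exp_mulVec_of_mulVec_eq_smul h,
    exp_mulVec_of_mulVec_eq_smul hneg, ← add_smul, smul_smul, Complex.cosh,
    Complex.exp_eq_exp_ℂ, div_eq_inv_mul]

end Matrix

open Matrix

/-- Let `A` be an `n × n` complex matrix and `α, β ∈ ℝ`. If every
eigenvalue `μ` of `A` (every element of the spectrum of `A` over `ℂ`) satisfies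
`μ·sinh μ + (α + βμ)·cosh μ ≠ 0`, then
`A·sinh A + (α·I + β·A)·cosh A` is invertible, where
`sinh A = (exp A − exp (−A))/2` and `cosh A = (exp A + exp (−A))/2`. -/
theorem stmt_2 (n : ℕ) (A : Matrix (Fin n) (Fin n) ℂ) (α β : ℝ)
    (h : ∀ μ ∈ spectrum ℂ A,
      μ * Complex.sinh μ + ((α : ℂ) + (β : ℂ) * μ) * Complex.cosh μ ≠ 0) :
    IsUnit (A * ((2 : ℂ)⁻¹ • (NormedSpace.exp A - NormedSpace.exp (-A))) +
      ((α : ℂ) • (1 : Matrix (Fin n) (Fin n) ℂ) + (β : ℂ) • A) *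
        ((2 : ℂ)⁻¹ • (NormedSpace.exp A + NormedSpace.exp (-A)))) := by
  have hE : Commute A (exp A) := (Commute.refl A).exp_right
  have hF : Commute A (exp (-A)) := (Commute.refl A).neg_right.exp_right
  by_contra hB
  obtain ⟨μ, hμ, v, hv, hAv, hBv⟩ := exists_mulVec_eq_smul_of_commute_of_not_isUnit
    (((Commute.refl A).mul_right ((hE.sub_right hF).smul_right _)).add_right
      ((((Commute.one_right A).smul_right _).add_right ((Commute.refl A).smul_right _)).mul_right
        ((hE.add_right hF).smul_right _))) hB
  simp only [add_mulVec, ← mulVec_mulVec, sinh_mulVec_of_mulVec_eq_smul hAv,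
    cosh_mulVec_of_mulVec_eq_smul hAv, mulVec_smul, smul_mulVec, one_mulVec, hAv, smul_smul,
    ← add_smul, smul_eq_zero, hv, or_false] at hBv
  exact h μ hμ (by linear_combination hBv)
end

section
/- Let α, β be real numbers with α > 0 and β > 0, and let λ ∈ ℂ. There exists a twice continuously differentiable function f : ℝ → ℂ, not identically zero on [0,1], satisfying f''(x) = λ² f(x) for all x ∈ ℝ, f'(0) = 0, and f'(1) = −(α + βλ) f(1), if and only if λ·sinh(λ) + (α + βλ)·cosh(λ) = 0. -/
/-!
Any solution of `f'' = λ² f` has constant Wronskian against the solutions `cosh (λ x)` and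
`sinh (λ x)`; with `f'(0) = 0` these two constants force `f = f(0) cosh (λ x)`, the case `λ = 0`
being `f' = 0`. The boundary condition at `1` then reads
`f(0) (λ sinh λ + (α + βλ) cosh λ) = 0`, and `f(0) ≠ 0` since `f` does not vanish on `[0,1]`.
Conversely, `cosh (λ x)` is a solution as soon as the characteristic equation holds.
-/

open Complex

theorem hasDerivAt_cosh_mul (lam : ℂ) (x : ℝ) :
    HasDerivAt (fun y : ℝ => cosh (lam * y)) (lam * sinh (lam * x)) x := by
  simpa [mul_comm] using
    ((hasDerivAt_cosh _).comp _ ((hasDerivAt_id (x : ℂ)).const_mul lam)).comp_ofReal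

theorem hasDerivAt_sinh_mul (lam : ℂ) (x : ℝ) :
    HasDerivAt (fun y : ℝ => sinh (lam * y)) (lam * cosh (lam * x)) x := by
  simpa [mul_comm] using
    ((hasDerivAt_sinh _).comp _ ((hasDerivAt_id (x : ℂ)).const_mul lam)).comp_ofReal

theorem deriv_cosh_mul (lam : ℂ) :
    deriv (fun y : ℝ => cosh (lam * y)) = fun y : ℝ => lam * sinh (lam * y) :=
  funext fun x => (hasDerivAt_cosh_mul lam x).deriv

theorem deriv_sinh_mul (lam : ℂ) :
    deriv (fun y : ℝ => sinh (lam * y)) = fun y : ℝ => lam * cosh (lam * y) :=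
  funext fun x => (hasDerivAt_sinh_mul lam x).deriv

theorem contDiff_cosh_mul (lam : ℂ) {n : WithTop ℕ∞} :
    ContDiff ℝ n fun y : ℝ => cosh (lam * y) :=
  (contDiff_cosh.restrict_scalars ℝ).comp (contDiff_const.mul ofRealCLM.contDiff)

theorem wronskian_eq_of_hasDerivAt {𝔸 : Type*} [NormedCommRing 𝔸] [NormedAlgebra ℝ 𝔸]
    {c : 𝔸} {f f' g g' : ℝ → 𝔸}
    (hf : ∀ x, HasDerivAt f (f' x) x) (hf' : ∀ x, HasDerivAt f' (c * f x) x)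
    (hg : ∀ x, HasDerivAt g (g' x) x) (hg' : ∀ x, HasDerivAt g' (c * g x) x) (x y : ℝ) :
    f' x * g x - f x * g' x = f' y * g y - f y * g' y := by
  have hW : ∀ z, HasDerivAt (fun z => f' z * g z - f z * g' z) 0 z := fun z =>
    (((hf' z).mul (hg z)).sub ((hf z).mul (hg' z))).congr_deriv (by ring)
  exact is_const_of_deriv_eq_zero (fun z => (hW z).differentiableAt) (fun z => (hW z).deriv) x y

theorem eq_mul_cosh_of_hasDerivAt {lam : ℂ} {f f' : ℝ → ℂ}
    (hf : ∀ x, HasDerivAt f (f' x) x) (hf' : ∀ x, HasDerivAt f' (lam ^ 2 * f x) x)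
    (h0 : f' 0 = 0) (x : ℝ) :
    f x = f 0 * cosh (lam * x) := by
  have hcosh' : ∀ x : ℝ, HasDerivAt (fun y : ℝ => lam * sinh (lam * y))
      (lam ^ 2 * cosh (lam * x)) x := fun x =>
    ((hasDerivAt_sinh_mul lam x).const_mul lam).congr_deriv (by ring)
  have hsinh' : ∀ x : ℝ, HasDerivAt (fun y : ℝ => lam * cosh (lam * y))
      (lam ^ 2 * sinh (lam * x)) x := fun x =>
    ((hasDerivAt_cosh_mul lam x).const_mul lam).congr_deriv (by ring)
  have hWc : ∀ x : ℝ, f' x * cosh (lam * x) - f x * (lam * sinh (lam * x)) = 0 := fun x => by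
    simpa [h0] using wronskian_eq_of_hasDerivAt hf hf' (hasDerivAt_cosh_mul lam) hcosh' x 0
  have hWs : ∀ x : ℝ, f' x * sinh (lam * x) - f x * (lam * cosh (lam * x)) = -(f 0 * lam) :=
    fun x => by
      simpa [h0] using wronskian_eq_of_hasDerivAt hf hf' (hasDerivAt_sinh_mul lam) hsinh' x 0
  have hderiv : ∀ x, f' x = lam * f 0 * sinh (lam * x) := fun x => by
    linear_combination cosh (lam * x) * hWc x - sinh (lam * x) * hWs x
      - f' x * cosh_sq_sub_sinh_sq (lam * x)
  rcases eq_or_ne lam 0 with rfl | hlam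
  · have hconst := is_const_of_deriv_eq_zero (fun y => (hf y).differentiableAt)
      (fun y => by simp [(hf y).deriv, hderiv]) x 0
    simp [hconst]
  · refine mul_left_cancel₀ hlam ?_
    linear_combination sinh (lam * x) * hWc x - cosh (lam * x) * hWs x
      - lam * f x * cosh_sq_sub_sinh_sq (lam * x)

theorem stmt_3_general (α β : ℝ) (lam : ℂ) :
    (∃ f : ℝ → ℂ, ContDiff ℝ 2 f ∧
        (¬ ∀ x ∈ Set.Icc (0 : ℝ) 1, f x = 0) ∧
        (∀ x : ℝ, deriv (deriv f) x = lam ^ 2 * f x) ∧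
        deriv f 0 = 0 ∧
        deriv f 1 = -((α : ℂ) + (β : ℂ) * lam) * f 1) ↔
      lam * Complex.sinh lam + ((α : ℂ) + (β : ℂ) * lam) * Complex.cosh lam = 0 := by
  constructor
  · rintro ⟨f, hf, hnz, hf'', hd0, hd1⟩
    have hf' : ∀ x, HasDerivAt (deriv f) (lam ^ 2 * f x) x := fun x =>
      hf'' x ▸ (hf.differentiable_deriv_two x).hasDerivAt
    set c := f 0
    have hcosh : f = fun x : ℝ => c * cosh (lam * x) := funext <|
      eq_mul_cosh_of_hasDerivAt (fun x => (hf.differentiable two_ne_zero x).hasDerivAt) hf' hd0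
    have hc : c ≠ 0 := fun h => hnz fun x _ => by simp [hcosh, h]
    have hf1 : f 1 = c * cosh lam := by simp [hcosh]
    have hd1' : deriv f 1 = c * (lam * sinh lam) := by
      rw [hcosh, ((hasDerivAt_cosh_mul lam 1).const_mul c).deriv, ofReal_one, mul_one]
    rw [hd1', hf1] at hd1
    refine (mul_eq_zero.1 ?_).resolve_left hc
    linear_combination hd1
  · intro h
    refine ⟨fun x => cosh (lam * x), contDiff_cosh_mul lam, fun hzero => ?_, fun x => ?_, ?_, ?_⟩
    · simpa using hzero 0 ⟨le_rfl, zero_le_one⟩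
    · simp only [deriv_cosh_mul, deriv_const_mul_field', deriv_sinh_mul]
      ring
    · simp [deriv_cosh_mul]
    · simp only [deriv_cosh_mul, ofReal_one, mul_one]
      linear_combination h

/-- Let `α, β > 0` be real and `λ ∈ ℂ`. There exists a twice continuously
differentiable `f : ℝ → ℂ`, not identically zero on `[0,1]`, with `f'' = λ² f` on `ℝ`,
`f'(0) = 0`, and `f'(1) = −(α + βλ) f(1)`, if and only if
`λ·sinh λ + (α + βλ)·cosh λ = 0`. -/
theorem stmt_3 (α β : ℝ) (hα : 0 < α) (hβ : 0 < β) (lam : ℂ) :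
    (∃ f : ℝ → ℂ, ContDiff ℝ 2 f ∧
        (¬ ∀ x ∈ Set.Icc (0 : ℝ) 1, f x = 0) ∧
        (∀ x : ℝ, deriv (deriv f) x = lam ^ 2 * f x) ∧
        deriv f 0 = 0 ∧
        deriv f 1 = -((α : ℂ) + (β : ℂ) * lam) * f 1) ↔
      lam * Complex.sinh lam + ((α : ℂ) + (β : ℂ) * lam) * Complex.cosh lam = 0 :=
  stmt_3_general α β lam
end

section
/- Let A be an n×n complex matrix, α, β ∈ ℝ, and B₁, B₂, B₃, B₄ ∈ ℂⁿ. Assume the matrix M := A·sinh(A) + (α·I + β·A)·cosh(A) is invertible. Define Q := M⁻¹·(A B₄ + B₃ + (cosh(A) + (α·I + β·A)·𝒢(A))·(A B₂ + B₁)), and define L₂ : ℝ → ℂⁿ by L₂(x) = −S(x)·(A B₂ + B₁) + cosh(xA)·Q, where S(x) = ∑_{k=0}^∞ (x^{2k+1}/(2k+1)!)·A^{2k}. Set L₁(x) := −sinh(xA)·(A B₂ + B₁) + A·cosh(xA)·Q, L₃ := −B₂, and L₄ := −β·𝒢(A)·(A B₂ + B₁) + β·cosh(A)·Q − B₄. Then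 for all x ∈ ℝ: L₂''(x) = A²·L₂(x) and L₁(x) = A·L₂(x); and furthermore B₁ − A·L₃ + L₂'(0) = 0, B₂ + L₃ = 0, B₃ − A·L₄ − L₂'(1) − α·L₂(1) = 0, and B₄ + L₄ − β·L₂(1) = 0. -/
/-!
Let `S(x) = ∑ₖ x^(2k+1)/(2k+1)! A^(2k)`, an entire version of `sinh(xA)/A`: splitting the
exponential series into even and odd parts gives `sinh(xA) = A S(x)`, and termwise differentiation
gives `S' = cosh(xA)`. Hence `L₂(x) = cosh(xA) Q − S(x)(AB₂ + B₁)` has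
`L₂' = A sinh(xA) Q − cosh(xA)(AB₂ + B₁)` and `L₂'' = A² L₂`, and `L₁ = A L₂`.
At `x = 0`, `cosh 0 = 1` and `sinh 0 = 0` give the first two boundary identities; at `x = 1`,
`S(1) = 𝒢(A)` and the remaining two are a rearrangement of
`M Q = AB₄ + B₃ + (cosh A + (αI + βA)𝒢(A))(AB₂ + B₁)`, which is where the invertibility of `M`
enters.
-/

open NormedSpace
open scoped Matrix Nat

attribute [local instance] Matrix.linftyOpNormedRing Matrix.linftyOpNormedAlgebra

section BanachAlgebra

variable {𝔸 : Type*} [NormedRing 𝔸] [NormedAlgebra ℂ 𝔸]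

noncomputable def coshSmul (a : 𝔸) (x : ℝ) : 𝔸 :=
  (2 : ℂ)⁻¹ • (exp ((x : ℂ) • a) + exp (-((x : ℂ) • a)))

noncomputable def sinhSmul (a : 𝔸) (x : ℝ) : 𝔸 :=
  (2 : ℂ)⁻¹ • (exp ((x : ℂ) • a) - exp (-((x : ℂ) • a)))

/-- The paper's `S(x)`, an entire version of `sinh (x a) / a`. -/
noncomputable def sinhQuot (a : 𝔸) (x : ℝ) : 𝔸 :=
  ∑' k : ℕ, (((x : ℂ) ^ (2 * k + 1) / (2 * k + 1)! : ℂ) • a ^ (2 * k))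

lemma coshSmul_zero (a : 𝔸) : coshSmul a 0 = 1 := by
  simp [coshSmul, ← two_smul ℂ (1 : 𝔸), smul_smul]

lemma sinhSmul_zero (a : 𝔸) : sinhSmul a 0 = 0 := by
  simp [sinhSmul]

lemma summable_norm_smul_pow (a : 𝔸) (z : ℂ) :
    Summable fun m => ‖(z ^ m / m ! : ℂ) • a ^ m‖ := by
  simpa [smul_pow, smul_smul, div_eq_inv_mul] using norm_expSeries_summable' (𝕂 := ℂ) (z • a)

lemma summable_norm_coshSmul_term (a : 𝔸) (z : ℂ) :
    Summable fun k => ‖(z ^ (2 * k) / (2 * k)! : ℂ) • a ^ (2 * k)‖ :=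
  (summable_norm_smul_pow a z).comp_injective (mul_right_injective₀ two_ne_zero)

lemma norm_coshSmul_term_le (a : 𝔸) (k : ℕ) {x R : ℝ} (hx : |x| ≤ R) :
    ‖((x : ℂ) ^ (2 * k) / (2 * k)! : ℂ) • a ^ (2 * k)‖ ≤
      ‖((R : ℂ) ^ (2 * k) / (2 * k)! : ℂ) • a ^ (2 * k)‖ := by
  simp only [norm_smul, norm_div, norm_pow, Complex.norm_real]
  gcongr
  simpa using hx.trans (le_abs_self R)

lemma hasDerivAt_sinhQuot_term (a : 𝔸) (k : ℕ) (x : ℝ) :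
    HasDerivAt (fun y : ℝ => ((y : ℂ) ^ (2 * k + 1) / (2 * k + 1)! : ℂ) • a ^ (2 * k))
      (((x : ℂ) ^ (2 * k) / (2 * k)! : ℂ) • a ^ (2 * k)) x := by
  have h := (((hasDerivAt_pow (2 * k + 1) (x : ℂ)).div_const ((2 * k + 1)! : ℂ)).comp_ofReal
    ).smul_const (a ^ (2 * k))
  refine h.congr_deriv (congrArg (· • _) ?_)
  rw [Nat.factorial_succ, Nat.cast_mul,
    mul_div_mul_left _ _ (Nat.cast_ne_zero.mpr (2 * k).succ_ne_zero), Nat.add_sub_cancel]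

variable [CompleteSpace 𝔸]

lemma hasSum_exp_smul (a : 𝔸) (z : ℂ) :
    HasSum (fun m => (z ^ m / m ! : ℂ) • a ^ m) (exp (z • a)) := by
  simpa [smul_pow, smul_smul, div_eq_inv_mul] using exp_series_hasSum_exp' (𝕂 := ℂ) (z • a)

lemma hasSum_coshSmul (a : 𝔸) (x : ℝ) :
    HasSum (fun k => ((x : ℂ) ^ (2 * k) / (2 * k)! : ℂ) • a ^ (2 * k)) (coshSmul a x) := by
  have h := ((hasSum_exp_smul a x).add (hasSum_exp_smul a (-x))).const_smul (2 : ℂ)⁻¹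
  rw [neg_smul] at h
  have hodd : ∀ m ∉ Set.range (2 * ·), (2 : ℂ)⁻¹ •
      (((x : ℂ) ^ m / m ! : ℂ) • a ^ m + ((-x : ℂ) ^ m / m ! : ℂ) • a ^ m) = 0 := by
    intro m hm
    obtain ⟨k, rfl⟩ : Odd m := Nat.not_even_iff_odd.mp fun ⟨k, hk⟩ => hm ⟨k, by dsimp only; omega⟩
    simp [Odd.neg_pow ⟨k, rfl⟩, neg_div]
  rw [coshSmul]
  convert ((mul_right_injective₀ two_ne_zero).hasSum_iff hodd).mpr h using 2 with k
  simp [Even.neg_pow (even_two_mul k), ← two_smul ℂ, smul_smul]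

lemma hasSum_sinhSmul (a : 𝔸) (x : ℝ) :
    HasSum (fun k => ((x : ℂ) ^ (2 * k + 1) / (2 * k + 1)! : ℂ) • a ^ (2 * k + 1))
      (sinhSmul a x) := by
  have h := ((hasSum_exp_smul a x).sub (hasSum_exp_smul a (-x))).const_smul (2 : ℂ)⁻¹
  rw [neg_smul] at h
  have heven : ∀ m ∉ Set.range (2 * · + 1), (2 : ℂ)⁻¹ •
      (((x : ℂ) ^ m / m ! : ℂ) • a ^ m - ((-x : ℂ) ^ m / m ! : ℂ) • a ^ m) = 0 := by
    intro m hm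
    obtain ⟨k, rfl⟩ : Even m := Nat.not_odd_iff_even.mp fun ⟨k, hk⟩ => hm ⟨k, hk.symm⟩
    simp [Even.neg_pow ⟨k, rfl⟩]
  have hinj : Function.Injective (2 * · + 1 : ℕ → ℕ) := fun i j hij => by dsimp only at hij; omega
  rw [sinhSmul]
  convert (hinj.hasSum_iff heven).mpr h using 2 with k
  simp [Odd.neg_pow (odd_two_mul_add_one k), neg_div, ← two_smul ℂ, smul_smul]

lemma hasDerivAt_exp_ofReal_smul (a : 𝔸) (x : ℝ) :
    HasDerivAt (fun y : ℝ => exp ((y : ℂ) • a)) (a * exp ((x : ℂ) • a)) x :=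
  ((hasDerivAt_exp_smul_const' (𝕂 := ℂ) a x).scomp x Complex.ofRealCLM.hasDerivAt).congr_deriv
    (one_smul ℝ _)

lemma hasDerivAt_coshSmul (a : 𝔸) (x : ℝ) : HasDerivAt (coshSmul a) (a * sinhSmul a x) x := by
  have h := ((hasDerivAt_exp_ofReal_smul a x).add
    (hasDerivAt_exp_ofReal_smul (-a) x)).const_smul (2 : ℂ)⁻¹
  simp only [smul_neg, neg_mul, ← sub_eq_add_neg, ← mul_sub, ← mul_smul_comm] at h
  exact h

lemma hasDerivAt_sinhSmul (a : 𝔸) (x : ℝ) : HasDerivAt (sinhSmul a) (a * coshSmul a x) x := by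
  have h := ((hasDerivAt_exp_ofReal_smul a x).sub
    (hasDerivAt_exp_ofReal_smul (-a) x)).const_smul (2 : ℂ)⁻¹
  simp only [smul_neg, neg_mul, sub_neg_eq_add, ← mul_add, ← mul_smul_comm] at h
  exact h

/-- The series of `sinhQuot a` is differentiated termwise on `(-R, R)`, `R = |x| + 1`, where the
derivatives are dominated by the terms of the series of `coshSmul a R`. -/
lemma summable_sinhQuot_and_hasDerivAt (a : 𝔸) (x : ℝ) :
    Summable (fun k => ((x : ℂ) ^ (2 * k + 1) / (2 * k + 1)! : ℂ) • a ^ (2 * k)) ∧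
    HasDerivAt (sinhQuot a) (∑' k, ((x : ℂ) ^ (2 * k) / (2 * k)! : ℂ) • a ^ (2 * k)) x := by
  set R := |x| + 1
  have hbound : ∀ k, ∀ y ∈ Set.Ioo (-R) R,
      ‖((y : ℂ) ^ (2 * k) / (2 * k)! : ℂ) • a ^ (2 * k)‖ ≤
        ‖((R : ℂ) ^ (2 * k) / (2 * k)! : ℂ) • a ^ (2 * k)‖ :=
    fun k y hy => norm_coshSmul_term_le a k (abs_le.mpr ⟨hy.1.le, hy.2.le⟩)
  have hderiv : ∀ k, ∀ y ∈ Set.Ioo (-R) R,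
      HasDerivAt (fun y : ℝ => ((y : ℂ) ^ (2 * k + 1) / (2 * k + 1)! : ℂ) • a ^ (2 * k))
        (((y : ℂ) ^ (2 * k) / (2 * k)! : ℂ) • a ^ (2 * k)) y :=
    fun k y _ => hasDerivAt_sinhQuot_term a k y
  have hx : x ∈ Set.Ioo (-R) R := ⟨by linarith [neg_abs_le x], by linarith [le_abs_self x]⟩
  have h0 : (0 : ℝ) ∈ Set.Ioo (-R) R := ⟨by linarith [abs_nonneg x], by linarith [abs_nonneg x]⟩
  have hsum0 :
      Summable fun k => (((0 : ℝ) : ℂ) ^ (2 * k + 1) / (2 * k + 1)! : ℂ) • a ^ (2 * k) := by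
    simp only [Complex.ofReal_zero, zero_pow (Nat.succ_ne_zero _), zero_div, zero_smul]
    exact summable_zero
  exact ⟨(summable_of_summable_hasDerivAt_of_isPreconnected (summable_norm_coshSmul_term a R)
      isOpen_Ioo isPreconnected_Ioo hderiv hbound h0 hsum0 hx :),
    (hasDerivAt_tsum_of_isPreconnected (summable_norm_coshSmul_term a R)
      isOpen_Ioo isPreconnected_Ioo hderiv hbound h0 hsum0 hx :)⟩

lemma hasDerivAt_sinhQuot (a : 𝔸) (x : ℝ) : HasDerivAt (sinhQuot a) (coshSmul a x) x :=
  (hasSum_coshSmul a x).tsum_eq ▸ (summable_sinhQuot_and_hasDerivAt a x).2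

lemma sinhSmul_eq_mul_sinhQuot (a : 𝔸) (x : ℝ) : sinhSmul a x = a * sinhQuot a x := by
  refine (hasSum_sinhSmul a x).unique ?_
  have h := (summable_sinhQuot_and_hasDerivAt a x).1.hasSum.mul_left a
  simp only [mul_smul_comm, ← pow_succ'] at h
  exact h

end BanachAlgebra

section HyperbolicSolution

variable {n : Type*} [Fintype n] [DecidableEq n] (A : Matrix n n ℂ) (p q : n → ℂ)

lemma HasDerivAt.mulVec_const {F : ℝ → Matrix n n ℂ} {F' : Matrix n n ℂ} {x : ℝ}
    (hF : HasDerivAt F F' x) (w : n → ℂ) : HasDerivAt (fun y => F y *ᵥ w) (F' *ᵥ w) x :=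
  (((Matrix.mulVecBilin ℝ ℂ).flip w).toContinuousLinearMap.hasFDerivAt.comp_hasDerivAt x hF :)

/-- The solution of `L'' = A² L` with `L 0 = p`, `L' 0 = q`. -/
noncomputable def hyperbolicSolution (x : ℝ) : n → ℂ :=
  coshSmul A x *ᵥ p + sinhQuot A x *ᵥ q

lemma deriv_hyperbolicSolution :
    deriv (hyperbolicSolution A p q) = fun x => (A * sinhSmul A x) *ᵥ p + coshSmul A x *ᵥ q :=
  funext fun x =>
    (((hasDerivAt_coshSmul A x).mulVec_const p).add
      ((hasDerivAt_sinhQuot A x).mulVec_const q)).deriv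

lemma deriv_deriv_hyperbolicSolution (x : ℝ) :
    deriv (deriv (hyperbolicSolution A p q)) x = (A * A) *ᵥ hyperbolicSolution A p q x := by
  have h : HasDerivAt (fun y => (A * sinhSmul A y) *ᵥ p + coshSmul A y *ᵥ q)
      ((A * (A * coshSmul A x)) *ᵥ p + (A * sinhSmul A x) *ᵥ q) x :=
    (((hasDerivAt_sinhSmul A x).const_mul A).mulVec_const p).add
      ((hasDerivAt_coshSmul A x).mulVec_const q)
  rw [deriv_hyperbolicSolution, h.deriv, hyperbolicSolution, sinhSmul_eq_mul_sinhQuot]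
  simp only [Matrix.mulVec_add, Matrix.mulVec_mulVec, Matrix.mul_assoc]

end HyperbolicSolution

/-- With `sinh(xA) = (exp(xA) − exp(−xA))/2`,
`cosh(xA) = (exp(xA) + exp(−xA))/2`, `𝒢(A) = ∑ₖ A^(2k)/(2k+1)!`, and
`S(x) = ∑ₖ (x^(2k+1)/(2k+1)!) A^(2k)`: if `M = A sinh A + (αI + βA) cosh A` is
invertible, `Q = M⁻¹(AB₄ + B₃ + (cosh A + (αI + βA)𝒢(A))(AB₂ + B₁))`,
`L₂(x) = −S(x)(AB₂+B₁) + cosh(xA)Q`, `L₁(x) = −sinh(xA)(AB₂+B₁) + A cosh(xA) Q`,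
`L₃ = −B₂`, `L₄ = −β𝒢(A)(AB₂+B₁) + β cosh(A) Q − B₄`, then `L₂'' = A²L₂`,
`L₁ = A L₂`, `B₁ − AL₃ + L₂'(0) = 0`, `B₂ + L₃ = 0`,
`B₃ − AL₄ − L₂'(1) − αL₂(1) = 0`, and `B₄ + L₄ − βL₂(1) = 0`. -/
theorem stmt_7 (n : ℕ) (A : Matrix (Fin n) (Fin n) ℂ) (α β : ℝ)
    (B₁ B₂ B₃ B₄ : Fin n → ℂ)
    (sinhxA coshxA S : ℝ → Matrix (Fin n) (Fin n) ℂ) (GA M : Matrix (Fin n) (Fin n) ℂ)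
    (hsinh : ∀ x : ℝ,
      sinhxA x = (2 : ℂ)⁻¹ • (NormedSpace.exp ((x : ℂ) • A) - NormedSpace.exp (-((x : ℂ) • A))))
    (hcosh : ∀ x : ℝ,
      coshxA x = (2 : ℂ)⁻¹ • (NormedSpace.exp ((x : ℂ) • A) + NormedSpace.exp (-((x : ℂ) • A))))
    (hS : ∀ x : ℝ, S x =
      ∑' k : ℕ, (((x : ℂ) ^ (2 * k + 1) / (Nat.factorial (2 * k + 1) : ℂ)) • A ^ (2 * k)))
    (hGA : GA = ∑' k : ℕ, ((Nat.factorial (2 * k + 1) : ℂ))⁻¹ • A ^ (2 * k))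
    (hM : M = A * sinhxA 1 + ((α : ℂ) • (1 : Matrix (Fin n) (Fin n) ℂ) + (β : ℂ) • A) * coshxA 1)
    (hMunit : IsUnit M)
    (Q : Fin n → ℂ)
    (hQ : Q = M⁻¹ *ᵥ (A *ᵥ B₄ + B₃ +
      (coshxA 1 + ((α : ℂ) • (1 : Matrix (Fin n) (Fin n) ℂ) + (β : ℂ) • A) * GA) *ᵥ
        (A *ᵥ B₂ + B₁)))
    (L₁ L₂ : ℝ → Fin n → ℂ) (L₃ L₄ : Fin n → ℂ)
    (hL₂ : ∀ x : ℝ, L₂ x = -(S x *ᵥ (A *ᵥ B₂ + B₁)) + coshxA x *ᵥ Q)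
    (hL₁ : ∀ x : ℝ, L₁ x = -(sinhxA x *ᵥ (A *ᵥ B₂ + B₁)) + (A * coshxA x) *ᵥ Q)
    (hL₃ : L₃ = -B₂)
    (hL₄ : L₄ = -((β : ℂ) • (GA *ᵥ (A *ᵥ B₂ + B₁))) + (β : ℂ) • (coshxA 1 *ᵥ Q) - B₄) :
    (∀ x : ℝ, deriv (deriv L₂) x = (A * A) *ᵥ L₂ x ∧ L₁ x = A *ᵥ L₂ x) ∧
    B₁ - A *ᵥ L₃ + deriv L₂ 0 = 0 ∧
    B₂ + L₃ = 0 ∧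
    B₃ - A *ᵥ L₄ - deriv L₂ 1 - (α : ℂ) • L₂ 1 = 0 ∧
    B₄ + L₄ - (β : ℂ) • L₂ 1 = 0 := by
  obtain rfl : sinhxA = sinhSmul A := funext hsinh
  obtain rfl : coshxA = coshSmul A := funext hcosh
  obtain rfl : S = sinhQuot A := funext hS
  obtain rfl : GA = sinhQuot A 1 := by
    rw [hGA]
    simp only [sinhQuot, Complex.ofReal_one, one_pow, one_div]
    rfl
  set v := A *ᵥ B₂ + B₁
  obtain rfl : L₂ = hyperbolicSolution A Q (-v) :=
    funext fun x => by rw [hL₂, hyperbolicSolution, Matrix.mulVec_neg, add_comm]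
  have hMQ : M *ᵥ Q = _ := congrArg (M *ᵥ ·) hQ
  rw [Matrix.mulVec_mulVec, Matrix.mul_nonsing_inv M ((Matrix.isUnit_iff_isUnit_det M).mp hMunit),
    Matrix.one_mulVec] at hMQ
  subst hM hL₃ hL₄
  refine ⟨fun x => ⟨deriv_deriv_hyperbolicSolution A Q (-v) x, ?_⟩, ?_, add_neg_cancel B₂, ?_, ?_⟩
  · rw [hL₁, hyperbolicSolution, sinhSmul_eq_mul_sinhQuot]
    simp only [Matrix.mulVec_add, Matrix.mulVec_neg, Matrix.mulVec_mulVec]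
    abel
  · simp only [deriv_hyperbolicSolution, coshSmul_zero, sinhSmul_zero, mul_zero, Matrix.zero_mulVec,
      Matrix.one_mulVec, Matrix.mulVec_neg, v]
    abel
  · simp only [deriv_hyperbolicSolution, hyperbolicSolution, Matrix.add_mulVec, Matrix.smul_mulVec,
      Matrix.mulVec_add, Matrix.mulVec_sub, Matrix.mulVec_neg, Matrix.mulVec_smul,
      ← Matrix.mulVec_mulVec, add_mul, smul_mul_assoc, one_mul] at hMQ ⊢
    linear_combination (norm := module) -hMQ
  · rw [hyperbolicSolution]
    simp only [Matrix.mulVec_neg, smul_add, smul_neg]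
    abel
end

section
/- Let A be an n×n real matrix and b ∈ ℝⁿ. If the pair (A, b) is controllable, i.e., the vectors b, A b, A² b, …, A^{n−1} b span ℝⁿ, then there exists a vector K ∈ ℝⁿ such that the matrix A + b·Kᵀ is Hurwitz, i.e., every eigenvalue μ ∈ ℂ of A + b·Kᵀ satisfies Re(μ) < 0. -/
/-!
Pole placement by Ackermann's formula. Let `ℓ` be the last coordinate functional of the basis
`b, Ab, …, Aⁿ⁻¹b`, so `ℓ Aᵏ b = 0` for `k < n - 1` and `ℓ Aⁿ⁻¹ b = 1`. For any `K` the rows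
`ℓ (A + b Kᵀ)ᵏ` agree with `ℓ Aᵏ` for `k < n`, while `ℓ (A + b Kᵀ)ⁿ = ℓ Aⁿ + Kᵀ`. Hence for a monic
`p` of degree `n` the choice `Kᵀ = -ℓ p(A)` gives `ℓ p(A + b Kᵀ) = 0`, and then also
`ℓ Aᵏ p(A + b Kᵀ) = ℓ p(A + b Kᵀ) (A + b Kᵀ)ᵏ = 0` for `k < n`. The rows `ℓ Aᵏ`, `k < n`, separate
points: writing `y = q(A) b` with `q ≠ 0` of degree `d < n`, the number `ℓ Aⁿ⁻¹⁻ᵈ y` is the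
leading coefficient of `q`. So `p(A + b Kᵀ) = 0`, and with `p = (X + 1)ⁿ` every eigenvalue of
`A + b Kᵀ` is `-1`.
-/

open Polynomial Matrix

variable {F ι : Type*} [Field F] [Fintype ι] [DecidableEq ι]

namespace Matrix

/-- `ℓ` is the last row of the inverse of the controllability matrix `[b, Ab, …, Aᵐb]`. -/
def IsLastKrylovDual (A : Matrix ι ι F) (b ℓ : ι → F) (m : ℕ) : Prop :=
  ∀ k ≤ m, ℓ ⬝ᵥ (A ^ k *ᵥ b) = if k = m then 1 else 0

section KrylovDual

variable {A : Matrix ι ι F} {b ℓ : ι → F} {m : ℕ}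

lemma exists_aeval_mulVec_eq_of_mem_span {y : ι → F}
    (hy : y ∈ Submodule.span F (Set.range fun k : Fin (m + 1) => A ^ (k : ℕ) *ᵥ b)) :
    ∃ q : F[X], q.natDegree ≤ m ∧ aeval A q *ᵥ b = y := by
  obtain ⟨c, rfl⟩ := (Submodule.mem_span_range_iff_exists_fun F).mp hy
  refine ⟨∑ k : Fin (m + 1), C (c k) * X ^ (k : ℕ), ?_, ?_⟩
  · exact natDegree_sum_le_of_forall_le _ _ fun k _ =>
      (natDegree_C_mul_X_pow_le _ _).trans (Nat.lt_succ_iff.mp k.isLt)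
  · simp [sum_mulVec, ← Algebra.smul_def, smul_mulVec]

lemma exists_isLastKrylovDual (hcard : Fintype.card ι = m + 1)
    (hctrb : Submodule.span F (Set.range fun k : Fin (m + 1) => A ^ (k : ℕ) *ᵥ b) = ⊤) :
    ∃ ℓ : ι → F, IsLastKrylovDual A b ℓ m := by
  let B := basisOfTopLeSpanOfCardEqFinrank _ hctrb.ge (by simp [hcard])
  refine ⟨fun i => B.coord (Fin.last m) (fun j => if i = j then 1 else 0), fun k hk => ?_⟩
  have hB : A ^ k *ᵥ b = B ⟨k, Nat.lt_succ_of_le hk⟩ := by simp [B]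
  simp_rw [hB, dotProduct_comm, dotProduct, ← smul_eq_mul]
  rw [← LinearMap.pi_apply_eq_sum_univ]
  simp [Module.Basis.coord_apply, Finsupp.single_apply, Fin.ext_iff]

lemma vecMul_pow_add_vecMulVec (hℓ : IsLastKrylovDual A b ℓ m) (K : ι → F) {k : ℕ}
    (hk : k ≤ m) :
    ℓ ᵥ* (A + vecMulVec b K) ^ k = ℓ ᵥ* A ^ k := by
  induction k with
  | zero => rfl
  | succ k ih =>
    rw [pow_succ, ← vecMul_vecMul, ih (by omega), vecMul_add, vecMul_vecMulVec, vecMul_vecMul,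
      ← pow_succ, ← dotProduct_mulVec, hℓ k (by omega), if_neg (by omega), zero_smul, add_zero]

lemma vecMul_pow_succ_add_vecMulVec (hℓ : IsLastKrylovDual A b ℓ m) (K : ι → F) :
    ℓ ᵥ* (A + vecMulVec b K) ^ (m + 1) = ℓ ᵥ* A ^ (m + 1) + K := by
  rw [pow_succ, ← vecMul_vecMul, vecMul_pow_add_vecMulVec hℓ K le_rfl, vecMul_add, vecMul_vecMulVec,
    vecMul_vecMul, ← pow_succ, ← dotProduct_mulVec, hℓ m le_rfl, if_pos rfl, one_smul]

lemma vecMul_aeval_add_vecMulVec (hℓ : IsLastKrylovDual A b ℓ m) (K : ι → F) {p : F[X]}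
    (hp : p.Monic) (hdeg : p.natDegree = m + 1) :
    ℓ ᵥ* aeval (A + vecMulVec b K) p = ℓ ᵥ* aeval A p + K := by
  have hexpand : ∀ N : Matrix ι ι F,
      ℓ ᵥ* aeval N p = ∑ i ∈ Finset.range (m + 1), p.coeff i • ℓ ᵥ* N ^ i + ℓ ᵥ* N ^ (m + 1) := by
    intro N
    rw [aeval_eq_sum_range, hdeg, Finset.sum_range_succ, vecMul_add, vecMul_sum, ← hdeg,
      hp.coeff_natDegree, one_smul]
    simp_rw [vecMul_smul]
  rw [hexpand, hexpand, vecMul_pow_succ_add_vecMulVec hℓ, ← add_assoc]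
  congr 2
  refine Finset.sum_congr rfl fun i hi => ?_
  rw [vecMul_pow_add_vecMulVec hℓ K (Nat.lt_succ_iff.mp (Finset.mem_range.mp hi))]

lemma dotProduct_aeval_mulVec (hℓ : IsLastKrylovDual A b ℓ m) {r : F[X]} (hr : r.natDegree ≤ m) :
    ℓ ⬝ᵥ (aeval A r *ᵥ b) = r.coeff m := by
  rw [aeval_eq_sum_range' (Nat.lt_succ_of_le hr), sum_mulVec, dotProduct_sum]
  simp_rw [smul_mulVec, dotProduct_smul]
  rw [Finset.sum_congr rfl fun k hk =>
    congrArg (r.coeff k • ·) (hℓ k (Nat.lt_succ_iff.mp (Finset.mem_range.mp hk)))]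
  simp

lemma eq_zero_of_forall_dotProduct_pow_mulVec_eq_zero (hℓ : IsLastKrylovDual A b ℓ m)
    (hctrb : Submodule.span F (Set.range fun k : Fin (m + 1) => A ^ (k : ℕ) *ᵥ b) = ⊤)
    {y : ι → F} (hy : ∀ k ≤ m, ℓ ⬝ᵥ (A ^ k *ᵥ y) = 0) : y = 0 := by
  obtain ⟨q, hqm, rfl⟩ := exists_aeval_mulVec_eq_of_mem_span (hctrb ▸ Submodule.mem_top (x := y))
  by_contra hy0
  have hq0 : q ≠ 0 := by rintro rfl; simp at hy0
  have hlead : ℓ ⬝ᵥ (A ^ (m - q.natDegree) *ᵥ (aeval A q *ᵥ b)) = q.leadingCoeff := by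
    rw [mulVec_mulVec, ← aeval_X_pow (R := F), ← map_mul,
      dotProduct_aeval_mulVec hℓ (by rw [natDegree_X_pow_mul _ hq0]; omega)]
    simpa [Nat.add_sub_cancel' hqm] using coeff_X_pow_mul q (m - q.natDegree) q.natDegree
  exact leadingCoeff_ne_zero.mpr hq0 (hlead.symm.trans (hy _ (Nat.sub_le _ _)))

lemma aeval_add_vecMulVec_neg_vecMul_aeval_eq_zero (hℓ : IsLastKrylovDual A b ℓ m)
    (hctrb : Submodule.span F (Set.range fun k : Fin (m + 1) => A ^ (k : ℕ) *ᵥ b) = ⊤)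
    {p : F[X]} (hp : p.Monic) (hdeg : p.natDegree = m + 1) :
    aeval (A + vecMulVec b (-(ℓ ᵥ* aeval A p))) p = 0 := by
  set M := A + vecMulVec b (-(ℓ ᵥ* aeval A p))
  have hℓM : ℓ ᵥ* aeval M p = 0 := by
    rw [vecMul_aeval_add_vecMulVec hℓ _ hp hdeg, add_neg_cancel]
  refine Matrix.toLin'.injective (LinearMap.ext fun x => ?_)
  rw [toLin'_apply, map_zero, LinearMap.zero_apply]
  refine eq_zero_of_forall_dotProduct_pow_mulVec_eq_zero hℓ hctrb fun k hk => ?_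
  have hcomm : M ^ k * aeval M p = aeval M p * M ^ k := by
    rw [← aeval_X_pow (R := F), ← map_mul, ← map_mul, mul_comm]
  rw [dotProduct_mulVec, ← vecMul_pow_add_vecMulVec hℓ _ hk, dotProduct_mulVec, vecMul_vecMul,
    hcomm, ← vecMul_vecMul, hℓM, zero_vecMul, zero_dotProduct]

end KrylovDual

theorem exists_aeval_add_vecMulVec_eq_zero {n : ℕ} (hn : Fintype.card ι = n) {A : Matrix ι ι F}
    {b : ι → F} (hctrb : Submodule.span F (Set.range fun k : Fin n => A ^ (k : ℕ) *ᵥ b) = ⊤)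
    {p : F[X]} (hp : p.Monic) (hdeg : p.natDegree = n) :
    ∃ K : ι → F, aeval (A + vecMulVec b K) p = 0 := by
  cases n with
  | zero =>
    have := Fintype.card_eq_zero_iff.mp hn
    exact ⟨0, Subsingleton.elim _ _⟩
  | succ m =>
    obtain ⟨ℓ, hℓ⟩ := exists_isLastKrylovDual hn hctrb
    exact ⟨_, aeval_add_vecMulVec_neg_vecMul_aeval_eq_zero hℓ hctrb hp hdeg⟩

lemma aeval_eq_zero_of_mem_spectrum_map {L : Type*} [Field L] [Algebra F L] {M : Matrix ι ι F}
    {p : F[X]} (hp : aeval M p = 0) {μ : L} (hμ : μ ∈ spectrum L (M.map (algebraMap F L))) :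
    aeval μ p = 0 := by
  have hmap : M.map (algebraMap F L) = (Algebra.ofId F L).mapMatrix M := rfl
  have hmem : aeval μ p ∈ spectrum L (0 : Matrix ι ι L) := by
    rw [← eval_map_algebraMap, ← map_zero (Algebra.ofId F L).mapMatrix, ← hp, ← aeval_algHom_apply,
      ← hmap, ← aeval_map_algebraMap L]
    exact spectrum.subset_polynomial_aeval _ _ ⟨μ, hμ, rfl⟩
  rw [spectrum.mem_iff, sub_zero] at hmem
  by_contra hμp
  exact hmem ((isUnit_iff_ne_zero.mpr hμp).map _)

end Matrix

/-- Let `A` be an `n × n` real matrix and `b ∈ ℝⁿ`. If the pair `(A, b)`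
is controllable (the vectors `b, Ab, …, A^(n−1)b` span `ℝⁿ`), then there exists `K ∈ ℝⁿ`
such that `A + b Kᵀ` is Hurwitz: every complex eigenvalue `μ` of `A + b Kᵀ` satisfies
`Re μ < 0`. -/
theorem stmt_10 (n : ℕ) (A : Matrix (Fin n) (Fin n) ℝ) (b : Fin n → ℝ)
    (hctrb : Submodule.span ℝ (Set.range fun i : Fin n => (A ^ (i : ℕ)) *ᵥ b) = ⊤) :
    ∃ K : Fin n → ℝ,
      ∀ μ ∈ spectrum ℂ ((A + Matrix.vecMulVec b K).map (Complex.ofReal)),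
        μ.re < 0 := by
  obtain ⟨K, hK⟩ := exists_aeval_add_vecMulVec_eq_zero (Fintype.card_fin n) hctrb
    ((monic_X_add_C (1 : ℝ)).pow n) (natDegree_pow_X_add_C n 1)
  refine ⟨K, fun μ hμ => ?_⟩
  rw [← Complex.coe_algebraMap] at hμ
  have hroot : (μ + 1) ^ n = 0 := by simpa using aeval_eq_zero_of_mem_spectrum_map hK hμ
  rw [eq_neg_of_add_eq_zero_left (eq_zero_of_pow_eq_zero hroot)]
  norm_num
end

section
/- Let w : ℝ × ℝ → ℝ be twice continuously differentiable and satisfy the wave equation ∂²w/∂t²(x,t) = ∂²w/∂x²(x,t) for all x ∈ [0,1] and t ≥ 0. Define ρ(t) = ∫₀¹ x · ∂w/∂t(x,t) · ∂w/∂x(x,t) dx. Then ρ is differentiable at every t ≥ 0 with ρ'(t) = (1/2)( (∂w/∂t(1,t))² + (∂w/∂x(1,t))² ) − (1/2) ∫₀¹ ( (∂w/∂t(x,t))² + (∂w/∂x(x,t))² ) dx. -/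
/-!
With `u = ∂ₜw` and `v = ∂ₓw`, the wave equation and the symmetry of second derivatives
give the first-order system `∂ₜu = ∂ₓv`, `∂ₜv = ∂ₓu`. Differentiating under the integral
sign, `ρ'(t) = ∫₀¹ x (∂ₜu v + u ∂ₜv) = ∫₀¹ x ∂ₓ(½(u² + v²))`, and an integration by parts
against the multiplier `x` yields the boundary term at `x = 1` minus the energy integral.
-/

open Set Function

section Slices

variable {𝕜 E : Type*} [NontriviallyNormedField 𝕜] [NormedAddCommGroup E] [NormedSpace 𝕜 E]
  {G : 𝕜 × 𝕜 → E} {x t : 𝕜}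

theorem DifferentiableAt.hasDerivAt_slice_fst (hG : DifferentiableAt 𝕜 G (x, t)) :
    HasDerivAt (fun y => G (y, t)) (fderiv 𝕜 G (x, t) (1, 0)) x :=
  hG.hasFDerivAt.comp_hasDerivAt x ((hasDerivAt_id x).prodMk (hasDerivAt_const x t))

theorem DifferentiableAt.hasDerivAt_slice_snd (hG : DifferentiableAt 𝕜 G (x, t)) :
    HasDerivAt (fun s => G (x, s)) (fderiv 𝕜 G (x, t) (0, 1)) t :=
  hG.hasFDerivAt.comp_hasDerivAt t ((hasDerivAt_const t x).prodMk (hasDerivAt_id t))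

end Slices

theorem ContDiffAt.fderiv_fderiv_apply_comm {𝕜 E F : Type*} [RCLike 𝕜] [NormedAddCommGroup E]
    [NormedSpace 𝕜 E] [NormedAddCommGroup F] [NormedSpace 𝕜 F] {f : E → F} {x : E}
    (hf : ContDiffAt 𝕜 2 f x) (v w : E) :
    fderiv 𝕜 (fun y => fderiv 𝕜 f y v) x w = fderiv 𝕜 (fun y => fderiv 𝕜 f y w) x v := by
  have hf' : DifferentiableAt 𝕜 (fderiv 𝕜 f) x :=
    (hf.fderiv_right (m := 1) le_rfl).differentiableAt one_ne_zero
  simp only [fderiv_clm_apply hf' (differentiableAt_const _), fderiv_const_apply,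
    ContinuousLinearMap.comp_zero, zero_add, ContinuousLinearMap.flip_apply]
  exact hf.isSymmSndFDerivAt (by simp) w v

theorem intervalIntegral.hasDerivAt_integral_of_continuous_deriv {E : Type*}
    [NormedAddCommGroup E] [NormedSpace ℝ E] {F F' : ℝ → ℝ → E} {a b t : ℝ}
    (hF : ∀ s, Continuous (F s)) (hF' : Continuous (uncurry F'))
    (hderiv : ∀ s x, HasDerivAt (fun s => F s x) (F' s x) s) :
    HasDerivAt (fun s => ∫ x in a..b, F s x) (∫ x in a..b, F' t x) t := by
  obtain ⟨M, hM⟩ : ∃ M, ∀ p ∈ Icc (t - 1) (t + 1) ×ˢ uIcc a b, ‖uncurry F' p‖ ≤ M :=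
    (isCompact_Icc.prod isCompact_uIcc).exists_bound_of_continuousOn hF'.continuousOn
  have hF't : Continuous (F' t) := hF'.comp (continuous_const.prodMk continuous_id)
  refine (hasDerivAt_integral_of_dominated_loc_of_deriv_le (bound := fun _ => M)
    (Metric.ball_mem_nhds t one_pos) (.of_forall fun s => (hF s).aestronglyMeasurable)
    ((hF t).intervalIntegrable a b) hF't.aestronglyMeasurable ?_ intervalIntegrable_const
    (.of_forall fun x _ s _ => hderiv s x)).2
  refine .of_forall fun x hx s hs => hM (s, x) ⟨?_, uIoc_subset_uIcc hx⟩
  rw [Real.ball_eq_Ioo] at hs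
  exact Ioo_subset_Icc_self hs

theorem hasDerivAt_integral_id_mul_mul_of_wave_system {u v : ℝ × ℝ → ℝ} (hu : ContDiff ℝ 1 u)
    (hv : ContDiff ℝ 1 v) {t : ℝ}
    (hut : ∀ x ∈ Icc (0 : ℝ) 1, fderiv ℝ u (x, t) (0, 1) = fderiv ℝ v (x, t) (1, 0))
    (hvt : ∀ x ∈ Icc (0 : ℝ) 1, fderiv ℝ v (x, t) (0, 1) = fderiv ℝ u (x, t) (1, 0)) :
    HasDerivAt (fun s => ∫ x in (0 : ℝ)..1, x * u (x, s) * v (x, s))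
      ((1 / 2) * (u (1, t) ^ 2 + v (1, t) ^ 2) -
        (1 / 2) * ∫ x in (0 : ℝ)..1, (u (x, t) ^ 2 + v (x, t) ^ 2)) t := by
  have hud : Differentiable ℝ u := hu.differentiable one_ne_zero
  have hvd : Differentiable ℝ v := hv.differentiable one_ne_zero
  have hu' : ∀ e, Continuous fun p => fderiv ℝ u p e := fun e =>
    (hu.continuous_fderiv one_ne_zero).clm_apply continuous_const
  have hv' : ∀ e, Continuous fun p => fderiv ℝ v p e := fun e =>
    (hv.continuous_fderiv one_ne_zero).clm_apply continuous_const
  have hρ := intervalIntegral.hasDerivAt_integral_of_continuous_deriv (a := 0) (b := 1) (t := t)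
    (F := fun s x => x * u (x, s) * v (x, s))
    (F' := fun s x =>
      x * (fderiv ℝ u (x, s) (0, 1) * v (x, s) + u (x, s) * fderiv ℝ v (x, s) (0, 1)))
    (fun s => by fun_prop) (by simp only [uncurry_def]; fun_prop) fun s x =>
      ((((hud (x, s)).hasDerivAt_slice_snd).const_mul x).mul
        (hvd (x, s)).hasDerivAt_slice_snd).congr_deriv (by ring)
  -- `x ∂ₜ(uv) = x ∂ₓg` by the system; integrating by parts against `x` leaves `g 1 - ∫ g`.
  set g : ℝ → ℝ := fun x => (1 / 2) * (u (x, t) ^ 2 + v (x, t) ^ 2)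
  set g' : ℝ → ℝ := fun x =>
    u (x, t) * fderiv ℝ u (x, t) (1, 0) + v (x, t) * fderiv ℝ v (x, t) (1, 0)
  have hg : ∀ x, HasDerivAt g (g' x) x := fun x => by
    refine ((((hud (x, t)).hasDerivAt_slice_fst.pow 2).add
      ((hvd (x, t)).hasDerivAt_slice_fst.pow 2)).const_mul (1 / 2 : ℝ)).congr_deriv ?_
    simp only [g']
    norm_num
    ring
  have hg' : Continuous g' := by fun_prop
  have hparts :
      ∫ x in (0 : ℝ)..1, x * g' x = 1 * g 1 - 0 * g 0 - ∫ x in (0 : ℝ)..1, 1 * g x :=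
    intervalIntegral.integral_mul_deriv_eq_deriv_mul (fun x _ => hasDerivAt_id x)
      (fun x _ => hg x) intervalIntegrable_const (hg'.intervalIntegrable 0 1)
  refine hρ.congr_deriv ?_
  rw [intervalIntegral.integral_congr (g := fun x => x * g' x) fun x hx => ?_, hparts,
    ← intervalIntegral.integral_const_mul]
  · simp only [g, one_mul, zero_mul, sub_zero]
  · rw [uIcc_of_le zero_le_one] at hx
    simp only [g', hut x hx, hvt x hx]
    ring

/-- Let `w` (written curried, `w x t`) be twice continuously
differentiable on `ℝ × ℝ` and satisfy `∂²w/∂t² = ∂²w/∂x²` for `x ∈ [0,1]`, `t ≥ 0`.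
With `ρ(t) = ∫₀¹ x · ∂w/∂t(x,t) · ∂w/∂x(x,t) dx`, `ρ` is differentiable at every `t ≥ 0`
with `ρ'(t) = ½((∂w/∂t(1,t))² + (∂w/∂x(1,t))²) − ½∫₀¹ ((∂w/∂t(x,t))² + (∂w/∂x(x,t))²) dx`. -/
theorem stmt_14 (w : ℝ → ℝ → ℝ) (hw : ContDiff ℝ 2 (Function.uncurry w))
    (hwave : ∀ x ∈ Set.Icc (0 : ℝ) 1, ∀ t : ℝ, 0 ≤ t →
      deriv (deriv (w x)) t = deriv (fun y => deriv (fun y' => w y' t) y) x) :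
    ∀ t : ℝ, 0 ≤ t →
      HasDerivAt
        (fun s : ℝ => ∫ x in (0 : ℝ)..1, x * deriv (w x) s * deriv (fun y => w y s) x)
        ((1 / 2) * ((deriv (w 1) t) ^ 2 + (deriv (fun y => w y t) 1) ^ 2) -
          (1 / 2) * ∫ x in (0 : ℝ)..1,
            ((deriv (w x) t) ^ 2 + (deriv (fun y => w y t) x) ^ 2)) t := by
  intro t ht
  set u : ℝ × ℝ → ℝ := fun p => fderiv ℝ (uncurry w) p (0, 1)
  set v : ℝ × ℝ → ℝ := fun p => fderiv ℝ (uncurry w) p (1, 0)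
  have hu : ContDiff ℝ 1 u := (hw.fderiv_right le_rfl).clm_apply contDiff_const
  have hv : ContDiff ℝ 1 v := (hw.fderiv_right le_rfl).clm_apply contDiff_const
  have hwd : Differentiable ℝ (uncurry w) := hw.differentiable two_ne_zero
  have hwt : ∀ x, deriv (w x) = fun s => u (x, s) := fun x =>
    funext fun s => (hwd (x, s)).hasDerivAt_slice_snd.deriv
  have hwx : ∀ s, deriv (fun y => w y s) = fun x => v (x, s) := fun s =>
    funext fun x => (hwd (x, s)).hasDerivAt_slice_fst.deriv
  have hut : ∀ x ∈ Icc (0 : ℝ) 1, fderiv ℝ u (x, t) (0, 1) = fderiv ℝ v (x, t) (1, 0) :=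
    fun x hx => by
      have := hwave x hx t ht
      rwa [hwt, hwx, ((hu.differentiable one_ne_zero) (x, t)).hasDerivAt_slice_snd.deriv,
        ((hv.differentiable one_ne_zero) (x, t)).hasDerivAt_slice_fst.deriv] at this
  have hvt : ∀ x ∈ Icc (0 : ℝ) 1, fderiv ℝ v (x, t) (0, 1) = fderiv ℝ u (x, t) (1, 0) :=
    fun x _ => hw.contDiffAt.fderiv_fderiv_apply_comm (1, 0) (0, 1)
  simp only [hwt, hwx]
  exact hasDerivAt_integral_id_mul_mul_of_wave_system hu hv hut hvt
end

section
/- Let α > 0, k > 0, and let w : ℝ × ℝ → ℝ be twice continuously differentiable, satisfying the wave equation ∂²w/∂t²(x,t) = ∂²w/∂x²(x,t) for all x ∈ [0,1] and t ≥ 0, together with the boundary conditions ∂w/∂x(0,t) = k·∂w/∂t(0,t) and ∂w/∂x(1,t) = −α·w(1,t) for all t ≥ 0. Define E(t) = ∫₀¹ ( (∂w/∂x(x,t))² + (∂w/∂t(x,t))² ) dx + α·w(1,t)². Then E is differentiable at every t ≥ 0 with E'(t) = −2k·(∂w/∂t(0,t))². -/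
/-!
Write `u = ∂w/∂x`, `v = ∂w/∂t`. By symmetry of second derivatives `∂u/∂t = ∂v/∂x`, and the wave
equation says `∂v/∂t = ∂u/∂x`; hence the time derivative of the energy density `u² + v²` is the
space derivative of the flux `2uv`. Differentiating under the integral sign, the derivative of the
bulk energy is `2uv` evaluated between `x = 0` and `x = 1`, and the boundary conditions turn this
into `-2α w(1,t) v(1,t) - 2k v(0,t)²`; the first term is cancelled by the derivative of the boundary
energy `α w(1,t)²`.
-/

open Function Set Metric MeasureTheory

noncomputable section

variable {E : Type*} [NormedAddCommGroup E] [NormedSpace ℝ E]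

def partialX (w : ℝ → ℝ → E) (x t : ℝ) : E := deriv (fun y => w y t) x

def partialT (w : ℝ → ℝ → E) (x t : ℝ) : E := deriv (w x) t

section PartialDerivatives

variable {w : ℝ → ℝ → E} {x t : ℝ}

theorem hasDerivAt_fderiv_uncurry_left (hw : DifferentiableAt ℝ (uncurry w) (x, t)) :
    HasDerivAt (fun y => w y t) (fderiv ℝ (uncurry w) (x, t) (1, 0)) x :=
  (hw.hasFDerivAt.comp_hasDerivAt x ((hasDerivAt_id x).prodMk (hasDerivAt_const x t)) :)

theorem hasDerivAt_fderiv_uncurry_right (hw : DifferentiableAt ℝ (uncurry w) (x, t)) :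
    HasDerivAt (w x) (fderiv ℝ (uncurry w) (x, t) (0, 1)) t :=
  hw.hasFDerivAt.comp_hasDerivAt t ((hasDerivAt_const t x).prodMk (hasDerivAt_id t))

theorem partialX_eq_fderiv (hw : DifferentiableAt ℝ (uncurry w) (x, t)) :
    partialX w x t = fderiv ℝ (uncurry w) (x, t) (1, 0) :=
  (hasDerivAt_fderiv_uncurry_left hw).deriv

theorem partialT_eq_fderiv (hw : DifferentiableAt ℝ (uncurry w) (x, t)) :
    partialT w x t = fderiv ℝ (uncurry w) (x, t) (0, 1) :=
  (hasDerivAt_fderiv_uncurry_right hw).deriv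

theorem hasDerivAt_partialX (hw : DifferentiableAt ℝ (uncurry w) (x, t)) :
    HasDerivAt (fun y => w y t) (partialX w x t) x := by
  rw [partialX_eq_fderiv hw]
  exact hasDerivAt_fderiv_uncurry_left hw

theorem hasDerivAt_partialT (hw : DifferentiableAt ℝ (uncurry w) (x, t)) :
    HasDerivAt (w x) (partialT w x t) t := by
  rw [partialT_eq_fderiv hw]
  exact hasDerivAt_fderiv_uncurry_right hw

theorem uncurry_partialX_eq (hw : Differentiable ℝ (uncurry w)) :
    uncurry (partialX w) = fun p => fderiv ℝ (uncurry w) p (1, 0) :=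
  funext fun ⟨_, _⟩ => partialX_eq_fderiv (hw _)

theorem uncurry_partialT_eq (hw : Differentiable ℝ (uncurry w)) :
    uncurry (partialT w) = fun p => fderiv ℝ (uncurry w) p (0, 1) :=
  funext fun ⟨_, _⟩ => partialT_eq_fderiv (hw _)

theorem ContDiff.uncurry_partialX {n : WithTop ℕ∞} (hw : ContDiff ℝ (n + 1) (uncurry w)) :
    ContDiff ℝ n (uncurry (partialX w)) := by
  rw [uncurry_partialX_eq (hw.differentiable (by simp))]
  exact (hw.fderiv_right le_rfl).clm_apply contDiff_const

theorem ContDiff.uncurry_partialT {n : WithTop ℕ∞} (hw : ContDiff ℝ (n + 1) (uncurry w)) :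
    ContDiff ℝ n (uncurry (partialT w)) := by
  rw [uncurry_partialT_eq (hw.differentiable (by simp))]
  exact (hw.fderiv_right le_rfl).clm_apply contDiff_const

theorem fderiv_fderiv_apply {F : Type*} [NormedAddCommGroup F] [NormedSpace ℝ F] {f : F → E}
    {p : F} (hf : DifferentiableAt ℝ (fderiv ℝ f) p) (e v : F) :
    fderiv ℝ (fun q => fderiv ℝ f q v) p e = fderiv ℝ (fderiv ℝ f) p e v := by
  rw [fderiv_clm_apply hf (differentiableAt_const v)]
  simp

theorem partialT_partialX (hw : ContDiff ℝ 2 (uncurry w)) (x t : ℝ) :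
    partialT (partialX w) x t = partialX (partialT w) x t := by
  have hd : Differentiable ℝ (uncurry w) := hw.differentiable two_ne_zero
  have hd' : Differentiable ℝ (fderiv ℝ (uncurry w)) :=
    (hw.fderiv_right (m := 1) (by norm_num)).differentiable one_ne_zero
  have hX : ContDiff ℝ 1 (uncurry (partialX w)) := hw.uncurry_partialX
  have hT : ContDiff ℝ 1 (uncurry (partialT w)) := hw.uncurry_partialT
  rw [partialT_eq_fderiv (hX.differentiable one_ne_zero _),
    partialX_eq_fderiv (hT.differentiable one_ne_zero _), uncurry_partialX_eq hd,
    uncurry_partialT_eq hd, fderiv_fderiv_apply (hd' _), fderiv_fderiv_apply (hd' _)]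
  exact hw.contDiffAt.isSymmSndFDerivAt (by norm_num) _ _

end PartialDerivatives

theorem hasDerivAt_intervalIntegral_of_contDiff [CompleteSpace E] {F : ℝ → ℝ → E}
    (hF : ContDiff ℝ 1 (uncurry F)) (a b t : ℝ) :
    HasDerivAt (fun s => ∫ x in a..b, F x s) (∫ x in a..b, partialT F x t) t := by
  have hFt : Continuous (uncurry (partialT F)) := (hF.uncurry_partialT (n := 0)).continuous
  obtain ⟨C, hC⟩ := (isCompact_uIcc.prod (isCompact_closedBall t 1)).exists_bound_of_continuousOn
    hFt.continuousOn
  refine (intervalIntegral.hasDerivAt_integral_of_dominated_loc_of_deriv_le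
    (F := fun s x => F x s) (F' := fun s x => partialT F x s) (bound := fun _ => C)
    (ball_mem_nhds t one_pos) ?_ ?_ ?_ ?_ ?_ ?_).2
  · exact .of_forall fun s => (hF.continuous.comp (Continuous.prodMk_left s)).aestronglyMeasurable
  · exact (hF.continuous.comp (Continuous.prodMk_left t)).intervalIntegrable a b
  · exact (hFt.comp (Continuous.prodMk_left t)).aestronglyMeasurable
  · exact .of_forall fun x hx s hs =>
      hC (x, s) ⟨uIoc_subset_uIcc hx, ball_subset_closedBall hs⟩
  · exact intervalIntegrable_const
  · exact .of_forall fun x _ s _ => hasDerivAt_partialT (hF.differentiable one_ne_zero _)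

section Energy

variable {w : ℝ → ℝ → ℝ}

def energyDensity (w : ℝ → ℝ → ℝ) (x t : ℝ) : ℝ := partialX w x t ^ 2 + partialT w x t ^ 2

theorem ContDiff.uncurry_energyDensity (hw : ContDiff ℝ 2 (uncurry w)) :
    ContDiff ℝ 1 (uncurry (energyDensity w)) :=
  (hw.uncurry_partialX.pow 2).add (hw.uncurry_partialT.pow 2)

theorem partialT_energyDensity (hw : ContDiff ℝ 2 (uncurry w)) (x t : ℝ) :
    partialT (energyDensity w) x t =
      2 * partialX w x t * partialT (partialX w) x t +
        2 * partialT w x t * partialT (partialT w) x t := by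
  have hX := hasDerivAt_partialT (x := x) (t := t)
    ((hw.uncurry_partialX (n := 1)).differentiable one_ne_zero _)
  have hT := hasDerivAt_partialT (x := x) (t := t)
    ((hw.uncurry_partialT (n := 1)).differentiable one_ne_zero _)
  refine ((hX.pow 2).add (hT.pow 2)).deriv.trans ?_
  ring

theorem hasDerivAt_energyFlux (hw : ContDiff ℝ 2 (uncurry w)) {x t : ℝ}
    (hwave : partialT (partialT w) x t = partialX (partialX w) x t) :
    HasDerivAt (fun y => 2 * partialX w y t * partialT w y t)
      (partialT (energyDensity w) x t) x := by
  have hX := hasDerivAt_partialX (x := x) (t := t)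
    ((hw.uncurry_partialX (n := 1)).differentiable one_ne_zero _)
  have hT := hasDerivAt_partialX (x := x) (t := t)
    ((hw.uncurry_partialT (n := 1)).differentiable one_ne_zero _)
  refine ((hX.const_mul 2).mul hT).congr_deriv ?_
  rw [partialT_energyDensity hw, partialT_partialX hw, hwave]
  ring

theorem hasDerivAt_integral_energyDensity (hw : ContDiff ℝ 2 (uncurry w)) {a b t : ℝ}
    (hwave : ∀ x ∈ uIcc a b, partialT (partialT w) x t = partialX (partialX w) x t) :
    HasDerivAt (fun s => ∫ x in a..b, energyDensity w x s)
      (2 * partialX w b t * partialT w b t - 2 * partialX w a t * partialT w a t) t := by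
  have hE := hw.uncurry_energyDensity
  have hE' : Continuous (uncurry (partialT (energyDensity w))) :=
    (hE.uncurry_partialT (n := 0)).continuous
  rw [← intervalIntegral.integral_eq_sub_of_hasDerivAt
    (fun x hx => hasDerivAt_energyFlux hw (hwave x hx))
    ((hE'.comp (Continuous.prodMk_left t)).intervalIntegrable a b)]
  exact hasDerivAt_intervalIntegral_of_contDiff hE a b t

end Energy

theorem stmt_15_general (α k : ℝ)
    (w : ℝ → ℝ → ℝ) (hw : ContDiff ℝ 2 (Function.uncurry w))
    (hwave : ∀ x ∈ Set.Icc (0 : ℝ) 1, ∀ t : ℝ, 0 ≤ t →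
      deriv (deriv (w x)) t = deriv (fun y => deriv (fun y' => w y' t) y) x)
    (hbc0 : ∀ t : ℝ, 0 ≤ t → deriv (fun y => w y t) 0 = k * deriv (w 0) t)
    (hbc1 : ∀ t : ℝ, 0 ≤ t → deriv (fun y => w y t) 1 = -α * w 1 t) :
    ∀ t : ℝ, 0 ≤ t →
      HasDerivAt
        (fun s : ℝ =>
          (∫ x in (0 : ℝ)..1,
            ((deriv (fun y => w y s) x) ^ 2 + (deriv (w x) s) ^ 2)) + α * (w 1 s) ^ 2)
        (-2 * k * (deriv (w 0) t) ^ 2) t := by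
  intro t ht
  have hwave' : ∀ x ∈ uIcc (0 : ℝ) 1, partialT (partialT w) x t = partialX (partialX w) x t :=
    fun x hx => hwave x (by rwa [uIcc_of_le zero_le_one] at hx) t ht
  have h0 : partialX w 0 t = k * partialT w 0 t := hbc0 t ht
  have h1 : partialX w 1 t = -α * w 1 t := hbc1 t ht
  have hboundary :=
    ((hasDerivAt_partialT (hw.differentiable two_ne_zero (1, t))).fun_pow 2).const_mul α
  show HasDerivAt (fun s => (∫ x in (0 : ℝ)..1, energyDensity w x s) + α * w 1 s ^ 2)
    (-2 * k * partialT w 0 t ^ 2) t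
  refine ((hasDerivAt_integral_energyDensity hw hwave').add hboundary).congr_deriv ?_
  rw [h0, h1]
  ring

/-- Let `α, k > 0` and let `w` (written curried, `w x t`) be twice
continuously differentiable on `ℝ × ℝ`, satisfying `∂²w/∂t² = ∂²w/∂x²` for `x ∈ [0,1]`,
`t ≥ 0`, with boundary conditions `∂w/∂x(0,t) = k·∂w/∂t(0,t)` and
`∂w/∂x(1,t) = −α·w(1,t)` for `t ≥ 0`. With
`E(t) = ∫₀¹ ((∂w/∂x(x,t))² + (∂w/∂t(x,t))²) dx + α·w(1,t)²`, `E` is differentiable at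
every `t ≥ 0` with `E'(t) = −2k·(∂w/∂t(0,t))²`. -/
theorem stmt_15 (α k : ℝ) (hα : 0 < α) (hk : 0 < k)
    (w : ℝ → ℝ → ℝ) (hw : ContDiff ℝ 2 (Function.uncurry w))
    (hwave : ∀ x ∈ Set.Icc (0 : ℝ) 1, ∀ t : ℝ, 0 ≤ t →
      deriv (deriv (w x)) t = deriv (fun y => deriv (fun y' => w y' t) y) x)
    (hbc0 : ∀ t : ℝ, 0 ≤ t → deriv (fun y => w y t) 0 = k * deriv (w 0) t)
    (hbc1 : ∀ t : ℝ, 0 ≤ t → deriv (fun y => w y t) 1 = -α * w 1 t) :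
    ∀ t : ℝ, 0 ≤ t →
      HasDerivAt
        (fun s : ℝ =>
          (∫ x in (0 : ℝ)..1,
            ((deriv (fun y => w y s) x) ^ 2 + (deriv (w x) s) ^ 2)) + α * (w 1 s) ^ 2)
        (-2 * k * (deriv (w 0) t) ^ 2) t :=
  stmt_15_general α k w hw hwave hbc0 hbc1

end
end

section
/- Let k > 0 and let p : ℝ × ℝ → ℝ be twice continuously differentiable, satisfying the wave equation ∂²p/∂t²(x,t) = ∂²p/∂x²(x,t) for all x ∈ [0,1] and t ≥ 0, together with the boundary conditions ∂p/∂x(0,t) = k·∂p/∂t(0,t) and p(1,t) = 0 for all t ≥ 0. Define E₂(t) = ∫₀¹ ( (∂p/∂x(x,t))² + (∂p/∂t(x,t))² ) dx. Then E₂ is differentiable at every t ≥ 0 with E₂'(t) = −2k·(∂p/∂t(0,t))². -/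
/-!
Differentiating under the integral sign, `E₂' = ∫₀¹ 2 (pₓ pₓₜ + pₜ pₜₜ)`. By the symmetry of
second derivatives and the wave equation `pₜₜ = pₓₓ`, the integrand is `∂ₓ (2 pₓ pₜ)`, so `E₂'(t)`
is the boundary term `2 pₓ pₜ` evaluated between `x = 0` and `x = 1`. Since `p(1, ·)` vanishes on
`[0, ∞)`, `pₜ(1, t) = 0` (a one-sided derivative when `t = 0`), and at `x = 0` the boundary
condition turns `2 pₓ pₜ` into `2k pₜ²`.
-/

open Set MeasureTheory Metric Function

theorem ContDiff.hasFDerivAt_fderiv_apply {𝕜 E F : Type*} [NontriviallyNormedField 𝕜]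
    [NormedAddCommGroup E] [NormedSpace 𝕜 E] [NormedAddCommGroup F] [NormedSpace 𝕜 F]
    {f : E → F} (hf : ContDiff 𝕜 2 f) (v x : E) :
    HasFDerivAt (fun y => fderiv 𝕜 f y v) ((fderiv 𝕜 (fderiv 𝕜 f) x).flip v) x :=
  (ContinuousLinearMap.apply 𝕜 F v).hasFDerivAt.comp x
    (((hf.fderiv_right (m := 1) le_rfl).differentiable one_ne_zero x).hasFDerivAt)

section

variable {E : Type*} [NormedAddCommGroup E] [NormedSpace ℝ E]
  {f g : ℝ × ℝ → E} {g' : ℝ × ℝ →L[ℝ] E}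

theorem HasFDerivAt.hasDerivAt_slice_fst {x t : ℝ} (h : HasFDerivAt g g' (x, t)) :
    HasDerivAt (fun y => g (y, t)) (g' (1, 0)) x :=
  h.comp_hasDerivAt x ((hasDerivAt_id x).prodMk (hasDerivAt_const x t))

theorem HasFDerivAt.hasDerivAt_slice_snd {x t : ℝ} (h : HasFDerivAt g g' (x, t)) :
    HasDerivAt (fun s => g (x, s)) (g' (0, 1)) t :=
  h.comp_hasDerivAt t ((hasDerivAt_const t x).prodMk (hasDerivAt_id t))

theorem deriv_eq_zero_of_eqOn_Ici {f : ℝ → E} {a t : ℝ} (hf : DifferentiableAt ℝ f t)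
    (h : EqOn f 0 (Ici a)) (ht : a ≤ t) :
    deriv f t = 0 := by
  rw [← hf.derivWithin (uniqueDiffOn_Ici a t ht), derivWithin_congr h (h ht), derivWithin_zero,
    Pi.zero_apply]

theorem hasDerivAt_intervalIntegral_of_hasDerivAt_slice {F F' : ℝ × ℝ → E} (hF : Continuous F)
    (hF' : Continuous F')
    (hderiv : ∀ x s, HasDerivAt (fun s => F (x, s)) (F' (x, s)) s) (a b t : ℝ) :
    HasDerivAt (fun s => ∫ x in a..b, F (x, s)) (∫ x in a..b, F' (x, t)) t := by
  have hslice : ∀ {G : ℝ × ℝ → E}, Continuous G → ∀ s, Continuous fun x => G (x, s) :=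
    fun hG s => hG.comp (continuous_id.prodMk continuous_const)
  obtain ⟨C, hC⟩ :=
    (isCompact_uIcc.prod (isCompact_closedBall t 1)).exists_bound_of_continuousOn hF'.continuousOn
  exact (intervalIntegral.hasDerivAt_integral_of_dominated_loc_of_deriv_le
    (ball_mem_nhds t one_pos) (.of_forall fun s => (hslice hF s).aestronglyMeasurable)
    ((hslice hF t).intervalIntegrable a b) (hslice hF' t).aestronglyMeasurable
    (bound := fun _ => C)
    (ae_of_all _ fun x hx s hs => hC (x, s) ⟨uIoc_subset_uIcc hx, ball_subset_closedBall hs⟩)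
    intervalIntegrable_const (ae_of_all _ fun x _ s _ => hderiv x s)).2

theorem ContDiff.hasDerivAt_fderiv_apply_slice_fst (hf : ContDiff ℝ 2 f) (v : ℝ × ℝ)
    (x t : ℝ) :
    HasDerivAt (fun y => fderiv ℝ f (y, t) v) (fderiv ℝ (fderiv ℝ f) (x, t) (1, 0) v) x :=
  (hf.hasFDerivAt_fderiv_apply v (x, t)).hasDerivAt_slice_fst

theorem ContDiff.hasDerivAt_fderiv_apply_slice_snd (hf : ContDiff ℝ 2 f) (v : ℝ × ℝ)
    (x t : ℝ) :
    HasDerivAt (fun s => fderiv ℝ f (x, s) v) (fderiv ℝ (fderiv ℝ f) (x, t) (0, 1) v) t :=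
  (hf.hasFDerivAt_fderiv_apply v (x, t)).hasDerivAt_slice_snd

end

theorem ContDiff.hasDerivAt_integral_energy {f : ℝ × ℝ → ℝ} (hf : ContDiff ℝ 2 f)
    {a b t : ℝ} (hwave : ∀ x ∈ uIcc a b,
      fderiv ℝ (fderiv ℝ f) (x, t) (0, 1) (0, 1) = fderiv ℝ (fderiv ℝ f) (x, t) (1, 0) (1, 0)) :
    HasDerivAt
      (fun s => ∫ x in a..b, fderiv ℝ f (x, s) (1, 0) ^ 2 + fderiv ℝ f (x, s) (0, 1) ^ 2)
      (2 * fderiv ℝ f (b, t) (1, 0) * fderiv ℝ f (b, t) (0, 1)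
        - 2 * fderiv ℝ f (a, t) (1, 0) * fderiv ℝ f (a, t) (0, 1)) t := by
  have hsymm : ∀ q,
      fderiv ℝ (fderiv ℝ f) q (1, 0) (0, 1) = fderiv ℝ (fderiv ℝ f) q (0, 1) (1, 0) :=
    fun q => hf.contDiffAt.isSymmSndFDerivAt (by simp) _ _
  have hDf : Continuous (fderiv ℝ f) := hf.continuous_fderiv two_ne_zero
  have hD : Continuous (fderiv ℝ (fderiv ℝ f)) :=
    (hf.fderiv_right (m := 1) le_rfl).continuous_fderiv one_ne_zero
  set F' : ℝ × ℝ → ℝ := fun q =>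
    2 * fderiv ℝ f q (1, 0) * fderiv ℝ (fderiv ℝ f) q (0, 1) (1, 0)
      + 2 * fderiv ℝ f q (0, 1) * fderiv ℝ (fderiv ℝ f) q (0, 1) (0, 1)
  have hF' : Continuous F' := by fun_prop
  have hleibniz := hasDerivAt_intervalIntegral_of_hasDerivAt_slice
    (F := fun q => fderiv ℝ f q (1, 0) ^ 2 + fderiv ℝ f q (0, 1) ^ 2) (by fun_prop) hF'
    (fun x s => (((hf.hasDerivAt_fderiv_apply_slice_snd _ x s).pow 2).add
      ((hf.hasDerivAt_fderiv_apply_slice_snd _ x s).pow 2)).congr_deriv (by ring)) a b t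
  have hflux : ∀ x ∈ uIcc a b,
      HasDerivAt (fun y => 2 * fderiv ℝ f (y, t) (1, 0) * fderiv ℝ f (y, t) (0, 1))
        (F' (x, t)) x := fun x hx =>
    (((hf.hasDerivAt_fderiv_apply_slice_fst _ x t).const_mul 2).mul
      (hf.hasDerivAt_fderiv_apply_slice_fst _ x t)).congr_deriv (by
        simp only [F', hsymm, hwave x hx]; ring)
  rwa [intervalIntegral.integral_eq_sub_of_hasDerivAt hflux
    ((hF'.comp (continuous_id.prodMk continuous_const)).intervalIntegrable a b)] at hleibniz

noncomputable def waveEnergy (p : ℝ → ℝ → ℝ) (a b s : ℝ) : ℝ :=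
  ∫ x in a..b, (deriv (fun y => p y s) x) ^ 2 + (deriv (p x) s) ^ 2

theorem hasDerivAt_waveEnergy {p : ℝ → ℝ → ℝ} (hp : ContDiff ℝ 2 (uncurry p))
    {a b t : ℝ} (hwave : ∀ x ∈ uIcc a b,
      deriv (deriv (p x)) t = deriv (fun y => deriv (fun y' => p y' t) y) x) :
    HasDerivAt (waveEnergy p a b)
      (2 * deriv (fun y => p y t) b * deriv (p b) t
        - 2 * deriv (fun y => p y t) a * deriv (p a) t) t := by
  have hdiff : Differentiable ℝ (uncurry p) := hp.differentiable two_ne_zero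
  have hpx : ∀ s, deriv (fun y => p y s) = fun x => fderiv ℝ (uncurry p) (x, s) (1, 0) :=
    fun s => funext fun x => (hdiff (x, s)).hasFDerivAt.hasDerivAt_slice_fst.deriv
  have hpt : ∀ x, deriv (p x) = fun s => fderiv ℝ (uncurry p) (x, s) (0, 1) :=
    fun x => funext fun s => (hdiff (x, s)).hasFDerivAt.hasDerivAt_slice_snd.deriv
  have h := hp.hasDerivAt_integral_energy fun x hx => by
    simpa only [hpx, hpt, (hp.hasDerivAt_fderiv_apply_slice_fst _ _ _).deriv,
      (hp.hasDerivAt_fderiv_apply_slice_snd _ _ _).deriv] using hwave x hx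
  unfold waveEnergy
  simpa only [hpx, hpt] using h

theorem stmt_16_general (k : ℝ)
    (p : ℝ → ℝ → ℝ) (hp : ContDiff ℝ 2 (Function.uncurry p))
    (hwave : ∀ x ∈ Set.Icc (0 : ℝ) 1, ∀ t : ℝ, 0 ≤ t →
      deriv (deriv (p x)) t = deriv (fun y => deriv (fun y' => p y' t) y) x)
    (hbc0 : ∀ t : ℝ, 0 ≤ t → deriv (fun y => p y t) 0 = k * deriv (p 0) t)
    (hbc1 : ∀ t : ℝ, 0 ≤ t → p 1 t = 0) :
    ∀ t : ℝ, 0 ≤ t →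
      HasDerivAt
        (fun s : ℝ => ∫ x in (0 : ℝ)..1,
          ((deriv (fun y => p y s) x) ^ 2 + (deriv (p x) s) ^ 2))
        (-2 * k * (deriv (p 0) t) ^ 2) t := by
  intro t ht
  have hp1 : deriv (p 1) t = 0 := deriv_eq_zero_of_eqOn_Ici
    ((hp.differentiable two_ne_zero (1, t)).hasFDerivAt.hasDerivAt_slice_snd.differentiableAt)
    (fun s hs => hbc1 s hs) ht
  have h := hasDerivAt_waveEnergy hp (a := 0) (b := 1) (t := t)
    fun x hx => hwave x (by rwa [uIcc_of_le zero_le_one] at hx) t ht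
  rw [hp1, hbc0 t ht] at h
  exact h.congr_deriv (by ring)

/-- Let `k > 0` and let `p` (written curried, `p x t`) be twice
continuously differentiable on `ℝ × ℝ`, satisfying `∂²p/∂t² = ∂²p/∂x²` for `x ∈ [0,1]`,
`t ≥ 0`, with boundary conditions `∂p/∂x(0,t) = k·∂p/∂t(0,t)` and `p(1,t) = 0` for
`t ≥ 0`. With `E₂(t) = ∫₀¹ ((∂p/∂x(x,t))² + (∂p/∂t(x,t))²) dx`, `E₂` is differentiable
at every `t ≥ 0` with `E₂'(t) = −2k·(∂p/∂t(0,t))²`. -/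
theorem stmt_16 (k : ℝ) (hk : 0 < k)
    (p : ℝ → ℝ → ℝ) (hp : ContDiff ℝ 2 (Function.uncurry p))
    (hwave : ∀ x ∈ Set.Icc (0 : ℝ) 1, ∀ t : ℝ, 0 ≤ t →
      deriv (deriv (p x)) t = deriv (fun y => deriv (fun y' => p y' t) y) x)
    (hbc0 : ∀ t : ℝ, 0 ≤ t → deriv (fun y => p y t) 0 = k * deriv (p 0) t)
    (hbc1 : ∀ t : ℝ, 0 ≤ t → p 1 t = 0) :
    ∀ t : ℝ, 0 ≤ t →
      HasDerivAt
        (fun s : ℝ => ∫ x in (0 : ℝ)..1,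
          ((deriv (fun y => p y s) x) ^ 2 + (deriv (p x) s) ^ 2))
        (-2 * k * (deriv (p 0) t) ^ 2) t :=
  stmt_16_general k p hp hwave hbc0 hbc1
end

section
/- Let M > 0, ω > 0, and let E : ℝ → ℝ be differentiable on [0,∞) with 0 ≤ E(t) ≤ M² e^{−2ωt} for all t ≥ 0, and suppose E'(t) = −h(t) for all t ≥ 0, where h : [0,∞) → ℝ is continuous and nonnegative. Then for every γ with 0 < γ < ω, the improper integral ∫₀^∞ e^{2γt} h(t) dt converges and satisfies ∫₀^∞ e^{2γt} h(t) dt ≤ E(0) + γ M² / (ω − γ). -/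
/-!
With `Ψ t = e^{2γt} E(t)` one has `Ψ' = 2γ Ψ - e^{2γt} h`, so integrating over `[0, T]`
and dropping `Ψ(T) ≥ 0` gives `∫₀ᵀ e^{2γt} h ≤ E(0) + 2γ ∫₀ᵀ e^{2γt} E`. The decay bound on
`E` makes the last integrand at most `M² e^{-2(ω-γ)t}`, whose integral over `[0, ∞)` is
`M² / (2(ω-γ))`. The partial integrals of the nonnegative integrand are thus uniformly
bounded, hence converge.
-/

open Set Real Filter Topology MeasureTheory

theorem intervalIntegral_exp_mul_le {a c T : ℝ} (ha : a < 0) (hcT : c ≤ T) :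
    ∫ t in c..T, exp (a * t) ≤ -exp (a * c) / a := by
  rw [intervalIntegral.integral_of_le hcT, ← integral_exp_mul_Ioi ha c]
  exact setIntegral_mono_set (integrableOn_exp_mul_Ioi ha c)
    (Eventually.of_forall fun t => (exp_pos _).le) Ioc_subset_Ioi_self.eventuallyLE

theorem exists_tendsto_intervalIntegral_le_of_nonneg {f : ℝ → ℝ} {a C : ℝ}
    (hf : ∀ T, IntegrableOn f (Ioc a T)) (hf_nonneg : ∀ t, a ≤ t → 0 ≤ f t)
    (hbound : ∀ T, a ≤ T → ∫ t in a..T, f t ≤ C) :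
    ∃ L, Tendsto (fun T => ∫ t in a..T, f t) atTop (𝓝 L) ∧ L ≤ C := by
  have hnorm : ∀ T, a ≤ T → ∫ t in a..T, ‖f t‖ = ∫ t in a..T, f t := fun T hT =>
    intervalIntegral.integral_congr fun t ht =>
      Real.norm_of_nonneg (hf_nonneg t (uIcc_of_le hT ▸ ht).1)
  have hint : IntegrableOn f (Ioi a) :=
    integrableOn_Ioi_of_intervalIntegral_norm_bounded C a hf tendsto_id <|
      (eventually_ge_atTop a).mono fun T hT => (hnorm T hT).trans_le (hbound T hT)
  have htends := intervalIntegral_tendsto_integral_Ioi a hint tendsto_id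
  exact ⟨_, htends, le_of_tendsto htends ((eventually_ge_atTop a).mono hbound)⟩

section Energy

variable {E h : ℝ → ℝ} {T : ℝ}

theorem intervalIntegral_exp_mul_mul_eq (k : ℝ) (hT : 0 ≤ T)
    (hE : ∀ t, 0 ≤ t → HasDerivWithinAt E (-h t) (Ici 0) t) (hh : ContinuousOn h (Ici 0)) :
    ∫ t in 0..T, exp (k * t) * h t =
      E 0 - exp (k * T) * E T + k * ∫ t in 0..T, exp (k * t) * E t := by
  have hE_cont : ContinuousOn E (Ici 0) := fun t ht => (hE t ht).continuousWithinAt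
  have hsub : uIcc 0 T ⊆ Ici 0 := by rw [uIcc_of_le hT]; exact Icc_subset_Ici_self
  have hw : Continuous fun t => exp (k * t) := by fun_prop
  have hEint : IntervalIntegrable (fun t => exp (k * t) * E t) volume 0 T :=
    (hw.continuousOn.mul (hE_cont.mono hsub)).intervalIntegrable
  have hhint : IntervalIntegrable (fun t => exp (k * t) * h t) volume 0 T :=
    (hw.continuousOn.mul (hh.mono hsub)).intervalIntegrable
  have hderiv : ∀ t ∈ Ioo 0 T, HasDerivAt (fun t => exp (k * t) * E t)
      (k * (exp (k * t) * E t) - exp (k * t) * h t) t := by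
    intro t ht
    have hw' : HasDerivAt (fun t => exp (k * t)) (exp (k * t) * k) t := by
      simpa using ((hasDerivAt_id t).const_mul k).exp
    exact (hw'.mul ((hE t ht.1.le).hasDerivAt (Ici_mem_nhds ht.1))).congr_deriv (by ring)
  have hftc := intervalIntegral.integral_eq_sub_of_hasDerivAt_of_le hT
    (hw.continuousOn.mul (hE_cont.mono Icc_subset_Ici_self))
    hderiv ((hEint.const_mul k).sub hhint)
  rw [intervalIntegral.integral_sub (hEint.const_mul k) hhint,
    intervalIntegral.integral_const_mul] at hftc
  simp only [Pi.mul_apply, mul_zero, exp_zero, one_mul] at hftc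
  linarith

theorem intervalIntegral_exp_mul_mul_le {M ω γ : ℝ} (hγ : 0 ≤ γ) (hγω : γ < ω)
    (hT : 0 ≤ T) (hE : ∀ t, 0 ≤ t → HasDerivWithinAt E (-h t) (Ici 0) t)
    (hh : ContinuousOn h (Ici 0)) (hE_nonneg : ∀ t, 0 ≤ t → 0 ≤ E t)
    (hE_le : ∀ t, 0 ≤ t → E t ≤ M ^ 2 * exp (-2 * ω * t)) :
    ∫ t in 0..T, exp (2 * γ * t) * h t ≤ E 0 + γ * M ^ 2 / (ω - γ) := by
  have hET : 0 ≤ exp (2 * γ * T) * E T := mul_nonneg (exp_pos _).le (hE_nonneg T hT)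
  have hw : Continuous fun t => exp (2 * γ * t) := by fun_prop
  have hcmp : ∫ t in 0..T, exp (2 * γ * t) * E t ≤
      ∫ t in 0..T, M ^ 2 * exp ((2 * γ - 2 * ω) * t) := by
    refine intervalIntegral.integral_mono_on hT ?_
      ((by fun_prop : Continuous _).intervalIntegrable _ _) fun t ht => ?_
    · refine (hw.continuousOn.mul ?_).intervalIntegrable
      rw [uIcc_of_le hT]
      exact fun t ht => (hE t ht.1).continuousWithinAt.mono Icc_subset_Ici_self
    · calc exp (2 * γ * t) * E t ≤ exp (2 * γ * t) * (M ^ 2 * exp (-2 * ω * t)) :=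
            mul_le_mul_of_nonneg_left (hE_le t ht.1) (exp_pos _).le
        _ = M ^ 2 * exp ((2 * γ - 2 * ω) * t) := by
            rw [mul_left_comm, ← exp_add]; ring_nf
  have hexp := intervalIntegral_exp_mul_le (c := 0) (by linarith : 2 * γ - 2 * ω < 0) hT
  rw [intervalIntegral.integral_const_mul] at hcmp
  rw [mul_zero, exp_zero] at hexp
  have hweighted : ∫ t in 0..T, exp (2 * γ * t) * E t ≤ M ^ 2 * (-1 / (2 * γ - 2 * ω)) :=
    hcmp.trans (mul_le_mul_of_nonneg_left hexp (sq_nonneg M))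
  have hval : 2 * γ * (M ^ 2 * (-1 / (2 * γ - 2 * ω))) = γ * M ^ 2 / (ω - γ) := by
    rw [(by ring : 2 * γ - 2 * ω = -2 * (ω - γ))]
    field_simp [(by linarith : ω - γ ≠ 0)]
  rw [intervalIntegral_exp_mul_mul_eq (2 * γ) hT hE hh]
  linarith [mul_le_mul_of_nonneg_left hweighted (by linarith : 0 ≤ 2 * γ)]

end Energy

theorem stmt_17_general (M ω : ℝ) (E h : ℝ → ℝ)
    (hE : ∀ t : ℝ, 0 ≤ t → HasDerivWithinAt E (-h t) (Set.Ici (0 : ℝ)) t)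
    (hEnn : ∀ t : ℝ, 0 ≤ t → 0 ≤ E t)
    (hEbd : ∀ t : ℝ, 0 ≤ t → E t ≤ M ^ 2 * Real.exp (-2 * ω * t))
    (hhcont : ContinuousOn h (Set.Ici (0 : ℝ)))
    (hhnn : ∀ t : ℝ, 0 ≤ t → 0 ≤ h t) :
    ∀ γ : ℝ, 0 < γ → γ < ω →
      ∃ L : ℝ,
        Tendsto (fun T : ℝ => ∫ t in (0 : ℝ)..T, Real.exp (2 * γ * t) * h t) atTop (nhds L) ∧
        L ≤ E 0 + γ * M ^ 2 / (ω - γ) := by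
  intro γ hγ hγω
  have hint (T : ℝ) : IntegrableOn (fun t => exp (2 * γ * t) * h t) (Ioc 0 T) :=
    ((by fun_prop : Continuous fun t => exp (2 * γ * t)).continuousOn.mul
      (hhcont.mono Icc_subset_Ici_self)).integrableOn_Icc.mono_set Ioc_subset_Icc_self
  exact exists_tendsto_intervalIntegral_le_of_nonneg hint
    (fun t ht => mul_nonneg (exp_pos _).le (hhnn t ht))
    (fun T hT => intervalIntegral_exp_mul_mul_le hγ.le hγω hT hE hhcont hEnn hEbd)

/-- Let `M, ω > 0` and let `E : ℝ → ℝ` be differentiable on `[0,∞)`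
with `0 ≤ E(t) ≤ M² e^(−2ωt)` and `E'(t) = −h(t)` for `t ≥ 0`, where `h` is continuous
and nonnegative on `[0,∞)`. Then for every `0 < γ < ω`, the improper integral
`∫₀^∞ e^(2γt) h(t) dt` (the limit of `∫₀^T` as `T → ∞`) converges, with
`∫₀^∞ e^(2γt) h(t) dt ≤ E(0) + γ M²/(ω − γ)`. -/
theorem stmt_17 (M ω : ℝ) (hM : 0 < M) (hω : 0 < ω) (E h : ℝ → ℝ)
    (hE : ∀ t : ℝ, 0 ≤ t → HasDerivWithinAt E (-h t) (Set.Ici (0 : ℝ)) t)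
    (hEnn : ∀ t : ℝ, 0 ≤ t → 0 ≤ E t)
    (hEbd : ∀ t : ℝ, 0 ≤ t → E t ≤ M ^ 2 * Real.exp (-2 * ω * t))
    (hhcont : ContinuousOn h (Set.Ici (0 : ℝ)))
    (hhnn : ∀ t : ℝ, 0 ≤ t → 0 ≤ h t) :
    ∀ γ : ℝ, 0 < γ → γ < ω →
      ∃ L : ℝ,
        Tendsto (fun T : ℝ => ∫ t in (0 : ℝ)..T, Real.exp (2 * γ * t) * h t) atTop (nhds L) ∧
        L ≤ E 0 + γ * M ^ 2 / (ω - γ) :=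
  stmt_17_general M ω E h hE hEnn hEbd hhcont hhnn
end
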